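/- arXiv:1709.08144 — 3 statements merged into one kernel-verified Lean document; each statement's English description precedes it below -/
import Mathlib

section
/- Let g be an element of Thompson's group V with N(g) ≥ 4. Then N(g)−1 ≤ N(g·x0) ≤ N(g)+1. Moreover, if ℓ0(g) = 1 (i.e., the single letter 0 is the range code of some branch of g), then N(g·x0) = N(g)+1 and ℓ0(g·x0) = 1. -/
/-!
Formalization framework for Thompson's groups `F ≤ T ≤ V` acting on the
Cantor set `{0,1}^ℕ`.  Elements of `V` are permutations of the Cantor set
admitting a finite table of branches `u → v` (complete prefix codes) with
`g(uω) = vω`.  Products in the paper are composed left-to-right, i.e. the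
paper's `g·h` is `Equiv.trans g h` (equivalently `h * g` in `Equiv.Perm`).
-/

abbrev CSeq : Type := ℕ → Bool
abbrev VPerm : Type := Equiv.Perm CSeq

/-- Concatenation of a finite binary word with an infinite binary word. -/
def app (u : List Bool) (ω : CSeq) : CSeq := fun n =>
  if h : n < u.length then u[n] else ω (n - u.length)

/-- The finite word `u` is a prefix of the infinite word `ω`. -/
def IsPref (u : List Bool) (ω : CSeq) : Prop := ∃ ω', ω = app u ω'

/-- The finite table of branches `T` represents the permutation `g` of the
Cantor set: the domain codes and the range codes each form a complete prefix
code, and `g` maps `uω ↦ vω` for every branch `(u, v) ∈ T`. -/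
def Represents (g : VPerm) (T : Finset (List Bool × List Bool)) : Prop :=
  (∀ ω : CSeq, ∃! p : List Bool × List Bool, p ∈ T ∧ IsPref p.1 ω) ∧
  (∀ ω : CSeq, ∃! p : List Bool × List Bool, p ∈ T ∧ IsPref p.2 ω) ∧
  (∀ p ∈ T, ∀ ω : CSeq, g (app p.1 ω) = app p.2 ω)

/-- A table of branches is reduced if it contains no pair of branches
`u0 → v0`, `u1 → v1`. -/
def Reduced (T : Finset (List Bool × List Bool)) : Prop :=
  ∀ u v : List Bool,
    ¬((u ++ [false], v ++ [false]) ∈ T ∧ (u ++ [true], v ++ [true]) ∈ T)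

/-- Membership in Thompson's group `V`. -/
def InV (g : VPerm) : Prop := ∃ T, Represents g T

/-- `u → v` is a branch of the (unique) reduced representation of `g`. -/
def IsBranch (g : VPerm) (u v : List Bool) : Prop :=
  ∃ T, Represents g T ∧ Reduced T ∧ (u, v) ∈ T

/-- `N(g)`: the number of branches of the reduced representation of `g`. -/
noncomputable def Nbr (g : VPerm) : ℕ :=
  sInf {n | ∃ T, Represents g T ∧ Reduced T ∧ T.card = n}

/-- `ℓ0(g)`: the unique `ℓ ≥ 1` such that `0^ℓ` is the range code of some
branch of `g`. -/
noncomputable def ell0 (g : VPerm) : ℕ :=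
  sInf {ℓ | 1 ≤ ℓ ∧ ∃ u, IsBranch g u (List.replicate ℓ false)}

/-- `ℓ1(g)`: the unique `ℓ ≥ 1` such that `1^ℓ` is the range code of some
branch of `g`. -/
noncomputable def ell1 (g : VPerm) : ℕ :=
  sInf {ℓ | 1 ≤ ℓ ∧ ∃ u, IsBranch g u (List.replicate ℓ true)}

/-- `w` is a strict prefix of the range code of some branch of `g`. -/
def StrictPrefOfBranch (g : VPerm) (w : List Bool) : Prop :=
  ∃ u v, IsBranch g u v ∧ w <+: v ∧ w ≠ v

/-- Strict lexicographic order on infinite binary words. -/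
def lexLt (a b : CSeq) : Prop :=
  ∃ n, (∀ i < n, a i = b i) ∧ a n = false ∧ b n = true

/-- Membership in Thompson's group `F`: an element of `V` preserving the
(lexicographic) order of the Cantor set. -/
def InF (g : VPerm) : Prop :=
  InV g ∧ ∀ a b : CSeq, lexLt a b → lexLt (g a) (g b)

/-- `(a, b, c)` is a (strict) cyclically ordered triple. -/
def cyc3 (a b c : CSeq) : Prop :=
  (lexLt a b ∧ lexLt b c) ∨ (lexLt b c ∧ lexLt c a) ∨ (lexLt c a ∧ lexLt a b)

/-- Membership in Thompson's group `T`: an element of `V` preserving the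
cyclic order of the Cantor set. -/
def InT (g : VPerm) : Prop :=
  InV g ∧ ∀ a b c : CSeq, cyc3 a b c → cyc3 (g a) (g b) (g c)

/-- Word length of `g` with respect to the generating set `S` (letters are
elements of `S` or inverses of elements of `S`). -/
noncomputable def wlen (S : Set VPerm) (g : VPerm) : ℕ :=
  sInf {n | ∃ l : List VPerm,
    l.length = n ∧ (∀ x ∈ l, x ∈ S ∨ x⁻¹ ∈ S) ∧ l.prod = g}

/-- `h'` is the copy `h_{[u]}` of `h` supported on the cylinder of `u`. -/
def IsCopy (h : VPerm) (u : List Bool) (h' : VPerm) : Prop :=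
  (∀ ω : CSeq, h' (app u ω) = app u (h ω)) ∧
  (∀ ω : CSeq, ¬ IsPref u ω → h' ω = ω)

/-- Evaluation (left-to-right) of the word `w` starting at the element `g`:
the paper's product `g · w`. -/
def wordEval (g : VPerm) (w : List VPerm) : VPerm :=
  w.foldl (fun a b => a.trans b) g

/-- Branches of the generator `x0`: `00→0`, `01→10`, `1→11`. -/
def x0T : Finset (List Bool × List Bool) :=
  {([false, false], [false]), ([false, true], [true, false]),
   ([true], [true, true])}

/-- Branches of the generator `x1`: `0→0`, `100→10`, `101→110`, `11→111`. -/
def x1T : Finset (List Bool × List Bool) :=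
  {([false], [false]), ([true, false, false], [true, false]),
   ([true, false, true], [true, true, false]),
   ([true, true], [true, true, true])}

/-- Branches of the generator `c1`: `0→10`, `10→11`, `11→0`. -/
def c1T : Finset (List Bool × List Bool) :=
  {([false], [true, false]), ([true, false], [true, true]),
   ([true, true], [false])}

/-- Branches of the generator `π0`: `0→10`, `10→0`, `11→11`. -/
def pi0T : Finset (List Bool × List Bool) :=
  {([false], [true, false]), ([true, false], [false]),
   ([true, true], [true, true])}

/-- The standard generators `x_j`, `j ≥ 0`, of `F`: for `r ≥ 1`,
`x_{r+1} = x0^{-r} · x1 · x0^{r}` in the left-to-right convention of the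
paper, i.e. `x0 ^ r * x1 * (x0⁻¹) ^ r` in `Equiv.Perm`. -/
def xseq (x0 x1 : VPerm) : ℕ → VPerm
  | 0 => x0
  | r + 1 => x0 ^ r * x1 * (x0⁻¹) ^ r

section Basics

lemma app_nil (ω : CSeq) : app [] ω = ω := by
  funext n; simp [app]

lemma app_eval_lt (u : List Bool) (ω : CSeq) (n : ℕ) (h : n < u.length) :
    app u ω n = u[n] := by simp [app, h]

lemma app_eval_ge (u : List Bool) (ω : CSeq) (n : ℕ) (h : u.length ≤ n) :
    app u ω n = ω (n - u.length) := by
  simp [app]; omega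

lemma app_append (u w : List Bool) (ω : CSeq) :
    app (u ++ w) ω = app u (app w ω) := by
  funext n
  rcases lt_or_ge n u.length with h | h
  · rw [app_eval_lt _ _ _ h, app_eval_lt _ _ _ (by simp; omega),
      List.getElem_append_left h]
  · rcases lt_or_ge n (u.length + w.length) with h2 | h2
    · rw [app_eval_lt _ _ _ (by simp; omega), app_eval_ge _ _ _ h,
        app_eval_lt _ _ _ (by omega), List.getElem_append_right h]
    · rw [app_eval_ge _ _ _ (by simp; omega), app_eval_ge _ _ _ h,
        app_eval_ge _ _ _ (by omega)]
      congr 1; simp; omega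

lemma app_inj {u : List Bool} {ω ω' : CSeq} (h : app u ω = app u ω') : ω = ω' := by
  funext n
  have := congrFun h (n + u.length)
  rwa [app_eval_ge _ _ _ (by omega), app_eval_ge _ _ _ (by omega),
    Nat.add_sub_cancel] at this

lemma isPref_app_self (u : List Bool) (ω : CSeq) : IsPref u (app u ω) := ⟨ω, rfl⟩

lemma isPref_of_prefix {u u' : List Bool} (h : u <+: u') (ω : CSeq) :
    IsPref u (app u' ω) := by
  obtain ⟨w, rfl⟩ := h
  exact ⟨app w ω, app_append u w ω⟩

lemma isPref_mono {u u' : List Bool} {ω : CSeq} (h : u <+: u') (h' : IsPref u' ω) :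
    IsPref u ω := by
  obtain ⟨τ, rfl⟩ := h'
  exact isPref_of_prefix h τ

lemma IsPref.eval {u : List Bool} {ω : CSeq} (h : IsPref u ω) {n : ℕ}
    (hn : n < u.length) : ω n = u[n] := by
  obtain ⟨τ, rfl⟩ := h
  exact app_eval_lt _ _ _ hn

lemma pref_le {u u' : List Bool} {ω : CSeq} (h : IsPref u ω) (h' : IsPref u' ω)
    (hn : u.length ≤ u'.length) : u <+: u' := by
  have : u = u'.take u.length := by
    apply List.ext_getElem (by simp; omega)
    intro i h1 h2
    rw [List.getElem_take]
    rw [← h.eval h1, ← h'.eval (by omega)]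
  exact this ▸ List.take_prefix _ _

lemma pref_comparable {u u' : List Bool} {ω : CSeq} (h : IsPref u ω)
    (h' : IsPref u' ω) : u <+: u' ∨ u' <+: u := by
  rcases le_total u.length u'.length with hn | hn
  · exact Or.inl (pref_le h h' hn)
  · exact Or.inr (pref_le h' h hn)

lemma not_sibling_pref {s : List Bool} {ω : CSeq}
    (h0 : IsPref (s ++ [false]) ω) (h1 : IsPref (s ++ [true]) ω) : False := by
  have := (pref_le h0 h1 (by simp)).eq_of_length (by simp)
  simpa using List.append_inj_right this (by rfl)

lemma exists_head (ω : CSeq) : ω = app [ω 0] (fun n => ω (n + 1)) := by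
  funext n
  cases n with
  | zero => simp [app]
  | succ m => simp [app]

lemma isPref_append_iff {u a : List Bool} {τ : CSeq} :
    IsPref (u ++ a) (app u τ) ↔ IsPref a τ := by
  constructor
  · rintro ⟨σ, h⟩
    rw [app_append] at h
    exact ⟨σ, app_inj h⟩
  · rintro ⟨σ, rfl⟩
    exact ⟨σ, (app_append u a σ).symm⟩

lemma isPref_cons_ext {u : List Bool} {ω : CSeq} (h : IsPref u ω) :
    ∃ b, IsPref (u ++ [b]) ω := by
  obtain ⟨τ, rfl⟩ := h
  refine ⟨τ 0, (fun n => τ (n + 1)), ?_⟩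
  rw [app_append]
  exact congrArg (app u) (exists_head τ)

lemma concat_inj {a b : List Bool} {x y : Bool} (h : a ++ [x] = b ++ [y]) :
    a = b ∧ x = y := by
  have hl : a.length = b.length := by
    have := congrArg List.length h; simpa using this
  obtain ⟨h1, h2⟩ := List.append_inj h hl
  exact ⟨h1, by simpa using h2⟩

end Basics
section Rigid

/-- `g` maps the cylinder `u` rigidly onto `v`. -/
def Rigid (g : VPerm) (u v : List Bool) : Prop := ∀ ω, g (app u ω) = app v ω

lemma app_ext {v v' : List Bool} (h : ∀ ω, app v ω = app v' ω) : v = v' := by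
  wlog hn : v.length ≤ v'.length generalizing v v'
  · exact (this (fun ω => (h ω).symm) (by omega)).symm
  have hpre : v <+: v' := pref_le ⟨fun _ => false, (h _).symm⟩ (isPref_app_self _ _) hn
  obtain ⟨w, rfl⟩ := hpre
  rcases w with _ | ⟨c, w⟩
  · simp
  · exfalso
    have h2 : ∀ ω : CSeq, ω = app (c :: w) ω := by
      intro ω
      apply app_inj (u := v)
      rw [← app_append]; exact h ω
    have := congrFun (h2 (fun _ => !c)) 0
    simp [app] at this

lemma rigid_unique {g : VPerm} {u v v' : List Bool} (h : Rigid g u v)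
    (h' : Rigid g u v') : v = v' := by
  apply app_ext
  intro ω
  rw [← h ω, ← h' ω]

lemma rigid_append {g : VPerm} {u v : List Bool} (h : Rigid g u v) (w : List Bool) :
    Rigid g (u ++ w) (v ++ w) := by
  intro ω
  rw [app_append, app_append]
  exact h _

lemma rigid_unsplit {g : VPerm} {u v : List Bool}
    (h0 : Rigid g (u ++ [false]) (v ++ [false]))
    (h1 : Rigid g (u ++ [true]) (v ++ [true])) : Rigid g u v := by
  intro ω
  rw [exists_head ω]
  cases hb : ω 0
  · rw [← app_append, ← app_append]; exact h0 _
  · rw [← app_append, ← app_append]; exact h1 _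

end Rigid

section Reps

variable {g : VPerm} {T : Finset (List Bool × List Bool)}

lemma Represents.rigid (hT : Represents g T) {p : List Bool × List Bool}
    (hp : p ∈ T) : Rigid g p.1 p.2 := hT.2.2 p hp

lemma dom_eq (hT : Represents g T) {p q : List Bool × List Bool}
    (hp : p ∈ T) (hq : q ∈ T) (h : p.1 <+: q.1) : p = q := by
  obtain ⟨r, -, hu⟩ := hT.1 (app q.1 (fun _ => false))
  rw [hu p ⟨hp, isPref_of_prefix h _⟩, hu q ⟨hq, isPref_app_self _ _⟩]

lemma ran_eq (hT : Represents g T) {p q : List Bool × List Bool}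
    (hp : p ∈ T) (hq : q ∈ T) (h : p.2 <+: q.2) : p = q := by
  obtain ⟨r, -, hu⟩ := hT.2.1 (app q.2 (fun _ => false))
  rw [hu p ⟨hp, isPref_of_prefix h _⟩, hu q ⟨hq, isPref_app_self _ _⟩]

lemma repr_of_rigid {g' : VPerm} {T' : Finset (List Bool × List Bool)}
    (hdom : ∀ ω : CSeq, ∃! p : List Bool × List Bool, p ∈ T' ∧ IsPref p.1 ω)
    (hrig : ∀ p ∈ T', Rigid g' p.1 p.2) : Represents g' T' := by
  refine ⟨hdom, ?_, fun p hp ω => hrig p hp ω⟩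
  intro ω
  obtain ⟨p, ⟨hpT, τ, hτ⟩, hu⟩ := hdom (g'.symm ω)
  refine ⟨p, ⟨hpT, τ, ?_⟩, ?_⟩
  · rw [← hrig p hpT τ, ← hτ]
    simp
  · rintro q ⟨hqT, σ, rfl⟩
    apply hu q
    refine ⟨hqT, σ, ?_⟩
    rw [← hrig q hqT σ]
    simp

lemma represents_symm (hT : Represents g T) :
    Represents g.symm (T.image Prod.swap) := by
  apply repr_of_rigid
  · intro ω
    obtain ⟨p, ⟨hp, hpre⟩, hu⟩ := hT.2.1 ω
    refine ⟨p.swap, ⟨Finset.mem_image_of_mem _ hp, hpre⟩, ?_⟩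
    rintro q ⟨hq, hqpre⟩
    obtain ⟨r, hr, rfl⟩ := Finset.mem_image.1 hq
    rw [hu r ⟨hr, hqpre⟩]
  · rintro q hq
    obtain ⟨r, hr, rfl⟩ := Finset.mem_image.1 hq
    intro ω
    show g.symm (app r.2 ω) = app r.1 ω
    rw [Equiv.symm_apply_eq]
    exact (hT.2.2 r hr ω).symm

lemma ranges_ne_nil (hT : Represents g T) (hcard : 2 ≤ T.card) :
    ∀ p ∈ T, p.2 ≠ [] := by
  rintro p hp hnil
  have hsub : T ⊆ {p} := by
    intro q hq
    have := ran_eq hT hp hq (hnil ▸ List.nil_prefix)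
    simp [this]
  have := Finset.card_le_card hsub
  simp at this
  omega

end Reps
section Uniqueness

variable {g : VPerm} {T T' : Finset (List Bool × List Bool)}

lemma exists_sibling (D : Finset (List Bool)) (hne : ∀ w ∈ D, w ≠ [])
    (hcover : ∀ τ : CSeq, ∃ w ∈ D, IsPref w τ)
    (hanti : ∀ w ∈ D, ∀ w' ∈ D, w <+: w' → w = w') :
    ∃ s, s ++ [false] ∈ D ∧ s ++ [true] ∈ D := by
  have hDne : D.Nonempty := by
    obtain ⟨w, hw, -⟩ := hcover (fun _ => false); exact ⟨w, hw⟩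
  obtain ⟨w, hwD, hmax⟩ := D.exists_max_image (·.length) hDne
  rcases (List.eq_nil_or_concat w) with rfl | ⟨s, b, rfl⟩
  · exact absurd rfl (hne _ hwD)
  simp only [List.concat_eq_append] at hwD hmax
  obtain ⟨w', hw'D, hp⟩ := hcover (app (s ++ [!b]) (fun _ => false))
  have hlen := hmax w' hw'D
  simp only [List.length_append, List.length_singleton] at hlen
  rcases Nat.lt_or_ge w'.length (s.length + 1) with h | h
  · exfalso
    have h1 : w' <+: s := by
      have := pref_le hp (isPref_of_prefix (List.prefix_append s [!b]) _) (by omega)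
      exact this
    have h2 : w' <+: s ++ [b] := h1.trans (List.prefix_append s [b])
    have := hanti w' hw'D _ hwD h2
    have := congrArg List.length this
    simp at this; omega
  · have hlen2 : w'.length = s.length + 1 := by omega
    have : w' = s ++ [!b] :=
      (pref_le hp (isPref_app_self _ _) (by simp [hlen2])).eq_of_length
        (by simp [hlen2])
    subst this
    cases b
    · exact ⟨s, hwD, by simpa using hw'D⟩
    · exact ⟨s, by simpa using hw'D, hwD⟩

lemma drop_append_of_prefix {u w : List Bool} (h : u <+: w) :
    w = u ++ w.drop u.length := by
  obtain ⟨t, rfl⟩ := h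
  simp

lemma key_mem (hT' : Represents g T') (hRed' : Reduced T') {u v : List Bool}
    (hrig : Rigid g u v)
    (hmin : ∀ p ∈ T', p.1 <+: u → p.1 = u) : (u, v) ∈ T' := by
  by_cases hmem : ∃ p ∈ T', p.1 = u
  · obtain ⟨p, hp, he⟩ := hmem
    have hr : Rigid g u p.2 := he ▸ hT'.rigid hp
    have hv : p.2 = v := rigid_unique hr hrig
    have : p = (u, v) := by
      rcases p with ⟨p1, p2⟩
      simp_all
    exact this ▸ hp
  · exfalso
    push_neg at hmem
    set D : Finset (List Bool) :=
      (T'.filter (fun p => u <+: p.1)).image (fun p => p.1.drop u.length) with hD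
    have hmemD : ∀ w ∈ D, ∃ p ∈ T', p.1 = u ++ w := by
      intro w hw
      obtain ⟨p, hp, rfl⟩ := Finset.mem_image.1 hw
      rw [Finset.mem_filter] at hp
      exact ⟨p, hp.1, drop_append_of_prefix hp.2⟩
    have hne : ∀ w ∈ D, w ≠ [] := by
      rintro w hw rfl
      obtain ⟨p, hp, he⟩ := hmemD [] hw
      simp at he
      exact hmem p hp he
    have hcover : ∀ τ : CSeq, ∃ w ∈ D, IsPref w τ := by
      intro τ
      obtain ⟨p, ⟨hp, hpre⟩, -⟩ := hT'.1 (app u τ)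
      have hcomp := pref_comparable hpre (isPref_app_self u τ)
      rcases hcomp with hc | hc
      · exact absurd (hmin p hp hc) (hmem p hp)
      · refine ⟨p.1.drop u.length, ?_, ?_⟩
        · exact Finset.mem_image_of_mem _ (Finset.mem_filter.2 ⟨hp, hc⟩)
        · rw [← isPref_append_iff (u := u), ← drop_append_of_prefix hc]
          exact hpre
    have hanti : ∀ w ∈ D, ∀ w' ∈ D, w <+: w' → w = w' := by
      intro w hw w' hw' hpre
      obtain ⟨t, rfl⟩ := hpre
      obtain ⟨p, hp, he⟩ := hmemD w hw
      obtain ⟨p', hp', he'⟩ := hmemD _ hw'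
      have hpp : p = p' := dom_eq hT' hp hp' (by rw [he, he']; exact ⟨t, by simp⟩)
      have h2 : u ++ w = u ++ (w ++ t) := by rw [← he, hpp, he']
      exact List.append_cancel_left h2
    obtain ⟨s, hs0, hs1⟩ := exists_sibling D hne hcover hanti
    obtain ⟨p0, hp0, he0⟩ := hmemD _ hs0
    obtain ⟨p1, hp1, he1⟩ := hmemD _ hs1
    have hr0 : p0.2 = v ++ (s ++ [false]) :=
      rigid_unique (he0 ▸ hT'.rigid hp0) (rigid_append hrig _)
    have hr1 : p1.2 = v ++ (s ++ [true]) :=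
      rigid_unique (he1 ▸ hT'.rigid hp1) (rigid_append hrig _)
    apply hRed' (u ++ s) (v ++ s)
    constructor
    · rw [List.append_assoc, ← he0, List.append_assoc, ← hr0]
      exact hp0
    · rw [List.append_assoc, ← he1, List.append_assoc, ← hr1]
      exact hp1

lemma mem_of_two_reps (hT : Represents g T) (hRed : Reduced T)
    (hT' : Represents g T') (hRed' : Reduced T') {u v : List Bool}
    (huv : (u, v) ∈ T) : (u, v) ∈ T' := by
  have hrig : Rigid g u v := hT.rigid huv
  apply key_mem hT' hRed' hrig
  intro p hp hpre
  by_contra hne'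
  have hpT : p ∈ T := by
    have : (p.1, p.2) ∈ T := by
      apply key_mem hT hRed (hT'.rigid hp)
      intro q hq hqpre
      have hqu : q.1 <+: u := hqpre.trans hpre
      have heq : q = (u, v) := dom_eq hT hq huv hqu
      have h1 : q.1 = u := by rw [heq]
      rw [h1] at hqpre
      rw [h1]
      exact (hpre.eq_of_length
        (le_antisymm hpre.length_le hqpre.length_le)).symm
    simpa using this
  have := dom_eq hT hpT huv hpre
  exact hne' (by rw [this])

theorem reduced_rep_unique (hT : Represents g T) (hRed : Reduced T)
    (hT' : Represents g T') (hRed' : Reduced T') : T = T' := by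
  apply Finset.Subset.antisymm
  · intro p hp
    have := mem_of_two_reps hT hRed hT' hRed' (u := p.1) (v := p.2) (by simpa using hp)
    simpa using this
  · intro p hp
    have := mem_of_two_reps hT' hRed' hT hRed (u := p.1) (v := p.2) (by simpa using hp)
    simpa using this

lemma Nbr_eq_card (hT : Represents g T) (hRed : Reduced T) : Nbr g = T.card := by
  have h1 : T.card ∈ {n | ∃ T, Represents g T ∧ Reduced T ∧ T.card = n} :=
    ⟨T, hT, hRed, rfl⟩
  unfold Nbr
  refine le_antisymm (Nat.sInf_le h1) ?_
  obtain ⟨T₂, h₂, r₂, hc⟩ := Nat.sInf_mem (⟨_, h1⟩ : Set.Nonempty _)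
  rw [← hc, reduced_rep_unique h₂ r₂ hT hRed]

lemma isBranch_mem (hT : Represents g T) (hRed : Reduced T) {u v : List Bool}
    (h : IsBranch g u v) : (u, v) ∈ T := by
  obtain ⟨T₃, h₃, r₃, hm⟩ := h
  rwa [reduced_rep_unique h₃ r₃ hT hRed] at hm

end Uniqueness
section Reduce

variable {g : VPerm} {T : Finset (List Bool × List Bool)}

lemma reduce_step (hT : Represents g T) {u v : List Bool}
    (h0 : (u ++ [false], v ++ [false]) ∈ T) (h1 : (u ++ [true], v ++ [true]) ∈ T) :
    ∃ T', Represents g T' ∧ T'.card < T.card := by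
  classical
  set c0 : List Bool × List Bool := (u ++ [false], v ++ [false]) with hc0
  set c1 : List Bool × List Bool := (u ++ [true], v ++ [true]) with hc1
  have hne : c0 ≠ c1 := by simp [hc0, hc1]
  refine ⟨insert (u, v) ((T.erase c0).erase c1), ?_, ?_⟩
  · apply repr_of_rigid
    · intro ω
      obtain ⟨p, ⟨hp, hpre⟩, hup⟩ := hT.1 ω
      have hex : ∃ q, q ∈ insert (u, v) ((T.erase c0).erase c1) ∧ IsPref q.1 ω := by
        by_cases hc : p = c0 ∨ p = c1
        · refine ⟨(u, v), Finset.mem_insert_self _ _, ?_⟩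
          rcases hc with rfl | rfl
          · exact isPref_mono (by exact ⟨[false], rfl⟩) hpre
          · exact isPref_mono (by exact ⟨[true], rfl⟩) hpre
        · push_neg at hc
          exact ⟨p, Finset.mem_insert_of_mem (Finset.mem_erase.2
            ⟨hc.2, Finset.mem_erase.2 ⟨hc.1, hp⟩⟩), hpre⟩
      obtain ⟨q, hq, hqpre⟩ := hex
      refine ⟨q, ⟨hq, hqpre⟩, ?_⟩
      rintro r ⟨hr, hrpre⟩
      -- uniqueness
      have key : ∀ r', r' ∈ insert (u, v) ((T.erase c0).erase c1) → IsPref r'.1 ω →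
          ∀ r'', r'' ∈ insert (u, v) ((T.erase c0).erase c1) → IsPref r''.1 ω →
          r' = (u, v) → r'' ≠ (u, v) → False := by
        rintro r' hr' hr'pre r'' hr'' hr''pre rfl hne''
        have hr''T : r'' ∈ T ∧ r'' ≠ c0 ∧ r'' ≠ c1 := by
          rcases Finset.mem_insert.1 hr'' with h | h
          · exact absurd h hne''
          · have h2 := Finset.mem_erase.1 h
            have h3 := Finset.mem_erase.1 h2.2
            exact ⟨h3.2, h3.1, h2.1⟩
        obtain ⟨b, hbpre⟩ := isPref_cons_ext hr'pre
        have hbT : ((u, v).1 ++ [b], (u, v).2 ++ [b]) ∈ T := by cases b <;> assumption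
        have h3 : r'' = ((u, v).1 ++ [b], (u, v).2 ++ [b]) :=
          (hup r'' ⟨hr''T.1, hr''pre⟩).trans
            (hup ((u, v).1 ++ [b], (u, v).2 ++ [b]) ⟨hbT, hbpre⟩).symm
        have this := h3
        cases b
        · exact hr''T.2.1 this
        · exact hr''T.2.2 this
      by_cases h1' : r = (u, v) <;> by_cases h2' : q = (u, v)
      · rw [h1', h2']
      · exact absurd (key r hr hrpre q hq hqpre h1' h2') id
      · exact absurd (key q hq hqpre r hr hrpre h2' h1') id
      · have hrT : r ∈ T := by
          rcases Finset.mem_insert.1 hr with h | h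
          · exact absurd h h1'
          · exact Finset.mem_erase.1 (Finset.mem_erase.1 h).2 |>.2
        have hqT : q ∈ T := by
          rcases Finset.mem_insert.1 hq with h | h
          · exact absurd h h2'
          · exact Finset.mem_erase.1 (Finset.mem_erase.1 h).2 |>.2
        rw [hup r ⟨hrT, hrpre⟩, hup q ⟨hqT, hqpre⟩]
    · intro p hp
      rcases Finset.mem_insert.1 hp with rfl | h
      · exact rigid_unsplit (hT.rigid h0) (hT.rigid h1)
      · exact hT.rigid (Finset.mem_erase.1 (Finset.mem_erase.1 h).2).2
  · have hc1m : c1 ∈ T.erase c0 := Finset.mem_erase.2 ⟨hne.symm, h1⟩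
    have hcard : ((T.erase c0).erase c1).card = T.card - 2 := by
      rw [Finset.card_erase_of_mem hc1m, Finset.card_erase_of_mem h0]
      omega
    have h2 : 2 ≤ T.card := Finset.one_lt_card.2 ⟨c0, h0, c1, h1, hne⟩
    calc (insert (u, v) ((T.erase c0).erase c1)).card
        ≤ ((T.erase c0).erase c1).card + 1 := Finset.card_insert_le _ _
      _ < T.card := by omega

lemma exists_reduced_aux (n : ℕ) : ∀ (g : VPerm) (T : Finset (List Bool × List Bool)),
    T.card ≤ n → Represents g T →
    ∃ T', Represents g T' ∧ Reduced T' ∧ T'.card ≤ T.card := by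
  induction n with
  | zero =>
    intro g T hc hT
    refine ⟨T, hT, ?_, le_rfl⟩
    intro u v ⟨h0, _⟩
    have : T = ∅ := Finset.card_eq_zero.1 (by omega)
    simp [this] at h0
  | succ n ih =>
    intro g T hc hT
    by_cases hR : Reduced T
    · exact ⟨T, hT, hR, le_rfl⟩
    · simp only [Reduced, not_forall, not_not] at hR
      obtain ⟨u, v, h0, h1⟩ := hR
      obtain ⟨T₂, hT₂, hlt⟩ := reduce_step hT h0 h1
      obtain ⟨T', h', r', le'⟩ := ih g T₂ (by omega) hT₂
      exact ⟨T', h', r', by omega⟩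

lemma exists_reduced (hT : Represents g T) :
    ∃ T', Represents g T' ∧ Reduced T' ∧ T'.card ≤ T.card :=
  exists_reduced_aux T.card g T le_rfl hT

end Reduce
section Comp

open Finset

variable {g' h' : VPerm} {T : Finset (List Bool × List Bool)}
  {loc : List Bool → Finset (List Bool × List Bool)}

/-- Refinement-composition of a table `T` for `g'` with local tables for `h'`. -/
def compT (T : Finset (List Bool × List Bool))
    (loc : List Bool → Finset (List Bool × List Bool)) :
    Finset (List Bool × List Bool) :=
  T.biUnion fun p => (loc p.2).image fun q => (p.1 ++ q.1, q.2)

lemma compT_mem {r : List Bool × List Bool} :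
    r ∈ compT T loc ↔ ∃ p ∈ T, ∃ q ∈ loc p.2, (p.1 ++ q.1, q.2) = r := by
  simp [compT]

lemma compT_represents (hT : Represents g' T)
    (hloc1 : ∀ p ∈ T, ∀ τ : CSeq,
      ∃! q : List Bool × List Bool, q ∈ loc p.2 ∧ IsPref q.1 τ)
    (hloc2 : ∀ p ∈ T, ∀ q ∈ loc p.2, ∀ ω : CSeq,
      h' (app p.2 (app q.1 ω)) = app q.2 ω) :
    Represents (g'.trans h') (compT T loc) := by
  apply repr_of_rigid
  · intro ω
    obtain ⟨p, ⟨hpT, τ, rfl⟩, hup⟩ := hT.1 ω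
    obtain ⟨q, ⟨hq, hqpre⟩, huq⟩ := hloc1 p hpT τ
    refine ⟨(p.1 ++ q.1, q.2), ⟨compT_mem.2 ⟨p, hpT, q, hq, rfl⟩,
      isPref_append_iff.2 hqpre⟩, ?_⟩
    rintro r ⟨hrmem, hrpre⟩
    obtain ⟨p', hp', q', hq', rfl⟩ := compT_mem.1 hrmem
    have hp'pre : IsPref p'.1 (app p.1 τ) :=
      isPref_mono (List.prefix_append _ _) hrpre
    have hpp : p' = p := hup p' ⟨hp', hp'pre⟩
    subst hpp
    have hq'pre : IsPref q'.1 τ := isPref_append_iff.1 hrpre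
    rw [huq q' ⟨hq', hq'pre⟩]
  · intro r hr
    obtain ⟨p, hp, q, hq, rfl⟩ := compT_mem.1 hr
    intro ω
    show h' (g' (app (p.1 ++ q.1) ω)) = app q.2 ω
    rw [app_append, hT.rigid hp]
    exact hloc2 p hp q hq ω

lemma compT_card (hT : Represents g' T) :
    (compT T loc).card = ∑ p ∈ T, (loc p.2).card := by
  rw [compT, Finset.card_biUnion]
  · refine Finset.sum_congr rfl fun p hp => ?_
    apply Finset.card_image_of_injective
    intro a b hab
    obtain ⟨h1, h2⟩ := Prod.mk.injEq _ _ _ _ ▸ hab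
    exact Prod.ext (List.append_cancel_left h1) h2
  · intro p hp p' hp' hne
    simp only [Finset.disjoint_left]
    intro r hr hr'
    obtain ⟨a, ha, rfl⟩ := Finset.mem_image.1 hr
    obtain ⟨b, hb, hab⟩ := Finset.mem_image.1 hr'
    have h1 : p'.1 ++ b.1 = p.1 ++ a.1 := congrArg Prod.fst hab
    have hcomp : p.1 <+: p'.1 ∨ p'.1 <+: p.1 := by
      have e1 : IsPref p.1 (app (p.1 ++ a.1) (fun _ => false)) :=
        isPref_of_prefix (List.prefix_append _ _) _
      have e2 : IsPref p'.1 (app (p.1 ++ a.1) (fun _ => false)) := by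
        rw [← h1]; exact isPref_of_prefix (List.prefix_append _ _) _
      exact pref_comparable e1 e2
    rcases hcomp with h | h
    · exact hne (dom_eq hT hp hp' h)
    · exact hne (dom_eq hT hp' hp h).symm

end Comp
section Loc

/-- Local tables for composing with `x0` (branches `00→0`, `01→10`, `1→11`). -/
def locx0 : List Bool → Finset (List Bool × List Bool)
  | [] => {([], [])}
  | [false] => {([false], [false]), ([true], [true, false])}
  | false :: false :: w => {([], false :: w)}
  | false :: true :: w => {([], true :: false :: w)}
  | true :: w => {([], true :: true :: w)}

/-- Local tables for composing with `x0⁻¹` (branches `0→00`, `10→01`, `11→1`). -/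
def locx0inv : List Bool → Finset (List Bool × List Bool)
  | [] => {([], [])}
  | [true] => {([false], [false, true]), ([true], [true])}
  | true :: true :: w => {([], true :: w)}
  | true :: false :: w => {([], false :: true :: w)}
  | false :: w => {([], false :: false :: w)}

lemma not_pref_FT {τ : CSeq} (h0 : IsPref [false] τ) (h1 : IsPref [true] τ) :
    False := by
  have := not_sibling_pref (s := []) (by simpa using h0) (by simpa using h1)
  exact this

lemma loc_split_exu {t0 t1 : List Bool} (τ : CSeq) :
    ∃! q : List Bool × List Bool,
      q ∈ ({([false], t0), ([true], t1)} : Finset (List Bool × List Bool)) ∧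
      IsPref q.1 τ := by
  have hhead := exists_head τ
  cases hb : τ 0
  · rw [hb] at hhead
    refine ⟨([false], t0), ⟨by simp, ⟨_, hhead⟩⟩, ?_⟩
    rintro q ⟨hq, hqpre⟩
    simp only [Finset.mem_insert, Finset.mem_singleton] at hq
    rcases hq with rfl | rfl
    · rfl
    · exact absurd (not_pref_FT ⟨_, hhead⟩ hqpre) id
  · rw [hb] at hhead
    refine ⟨([true], t1), ⟨by simp, ⟨_, hhead⟩⟩, ?_⟩
    rintro q ⟨hq, hqpre⟩
    simp only [Finset.mem_insert, Finset.mem_singleton] at hq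
    rcases hq with rfl | rfl
    · exact absurd (not_pref_FT hqpre ⟨_, hhead⟩) id
    · rfl

lemma loc_single_exu {t : List Bool} (τ : CSeq) :
    ∃! q : List Bool × List Bool,
      q ∈ ({([], t)} : Finset (List Bool × List Bool)) ∧ IsPref q.1 τ := by
  refine ⟨([], t), ⟨by simp, ⟨τ, (app_nil τ).symm⟩⟩, ?_⟩
  rintro q ⟨hq, -⟩
  simpa using hq

lemma locx0_exu {v : List Bool} (hv : v ≠ []) (τ : CSeq) :
    ∃! q : List Bool × List Bool, q ∈ locx0 v ∧ IsPref q.1 τ := by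
  match v, hv with
  | [false], _ => exact loc_split_exu τ
  | false :: false :: w, _ => exact loc_single_exu τ
  | false :: true :: w, _ => exact loc_single_exu τ
  | true :: w, _ => exact loc_single_exu τ

lemma locx0inv_exu {v : List Bool} (hv : v ≠ []) (τ : CSeq) :
    ∃! q : List Bool × List Bool, q ∈ locx0inv v ∧ IsPref q.1 τ := by
  match v, hv with
  | [true], _ => exact loc_split_exu τ
  | true :: true :: w, _ => exact loc_single_exu τ
  | true :: false :: w, _ => exact loc_single_exu τ
  | false :: w, _ => exact loc_single_exu τ

lemma locx0_card {v : List Bool} (hv : v ≠ []) :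
    (locx0 v).card = if v = [false] then 2 else 1 := by
  match v, hv with
  | [false], _ => simp [locx0]
  | false :: false :: w, _ => simp [locx0]
  | false :: true :: w, _ => simp [locx0]
  | true :: w, _ => simp [locx0]

lemma locx0inv_card {v : List Bool} (hv : v ≠ []) :
    (locx0inv v).card = if v = [true] then 2 else 1 := by
  match v, hv with
  | [true], _ => simp [locx0inv]
  | true :: true :: w, _ => simp [locx0inv]
  | true :: false :: w, _ => simp [locx0inv]
  | false :: w, _ => simp [locx0inv]

end Loc
section LocRig

lemma locx0_rig {h' : VPerm}
    (hA : ∀ ω, h' (app [false, false] ω) = app [false] ω)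
    (hB : ∀ ω, h' (app [false, true] ω) = app [true, false] ω)
    (hC : ∀ ω, h' (app [true] ω) = app [true, true] ω)
    {v : List Bool} (hv : v ≠ []) :
    ∀ q ∈ locx0 v, ∀ ω : CSeq, h' (app v (app q.1 ω)) = app q.2 ω := by
  match v, hv with
  | [false], _ =>
    intro q hq ω
    simp only [locx0, Finset.mem_insert, Finset.mem_singleton] at hq
    rcases hq with rfl | rfl
    · rw [← app_append]; exact hA ω
    · rw [← app_append]; exact hB ω
  | false :: false :: w, _ =>
    intro q hq ω
    simp only [locx0, Finset.mem_singleton] at hq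
    subst hq
    rw [app_nil, show (false :: false :: w) = [false, false] ++ w from rfl,
      app_append, hA, ← app_append]; rfl
  | false :: true :: w, _ =>
    intro q hq ω
    simp only [locx0, Finset.mem_singleton] at hq
    subst hq
    rw [app_nil, show (false :: true :: w) = [false, true] ++ w from rfl,
      app_append, hB, ← app_append]; rfl
  | true :: w, _ =>
    intro q hq ω
    simp only [locx0, Finset.mem_singleton] at hq
    subst hq
    rw [app_nil, show (true :: w) = [true] ++ w from rfl,
      app_append, hC, ← app_append]; rfl

lemma locx0inv_rig {h' : VPerm}
    (hA : ∀ ω, h' (app [false] ω) = app [false, false] ω)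
    (hB : ∀ ω, h' (app [true, false] ω) = app [false, true] ω)
    (hC : ∀ ω, h' (app [true, true] ω) = app [true] ω)
    {v : List Bool} (hv : v ≠ []) :
    ∀ q ∈ locx0inv v, ∀ ω : CSeq, h' (app v (app q.1 ω)) = app q.2 ω := by
  match v, hv with
  | [true], _ =>
    intro q hq ω
    simp only [locx0inv, Finset.mem_insert, Finset.mem_singleton] at hq
    rcases hq with rfl | rfl
    · rw [← app_append]; exact hB ω
    · rw [← app_append]; exact hC ω
  | true :: true :: w, _ =>
    intro q hq ω
    simp only [locx0inv, Finset.mem_singleton] at hq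
    subst hq
    rw [app_nil, show (true :: true :: w) = [true, true] ++ w from rfl,
      app_append, hC, ← app_append]; rfl
  | true :: false :: w, _ =>
    intro q hq ω
    simp only [locx0inv, Finset.mem_singleton] at hq
    subst hq
    rw [app_nil, show (true :: false :: w) = [true, false] ++ w from rfl,
      app_append, hB, ← app_append]; rfl
  | false :: w, _ =>
    intro q hq ω
    simp only [locx0inv, Finset.mem_singleton] at hq
    subst hq
    rw [app_nil, show (false :: w) = [false] ++ w from rfl,
      app_append, hA, ← app_append]; rfl

end LocRig
section Cards

variable {g' : VPerm} {T : Finset (List Bool × List Bool)}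

lemma filter_range_card_le (hT : Represents g' T) (v : List Bool) :
    (T.filter (fun p => p.2 = v)).card ≤ 1 := by
  classical
  apply Finset.card_le_one.2
  intro p hp q hq
  rw [Finset.mem_filter] at hp hq
  exact ran_eq hT hp.1 hq.1 (by rw [hp.2, hq.2])

lemma compx0_card (hT : Represents g' T) (hne : ∀ p ∈ T, p.2 ≠ []) :
    (compT T locx0).card = T.card + (T.filter (fun p => p.2 = [false])).card := by
  classical
  rw [compT_card hT]
  calc ∑ p ∈ T, (locx0 p.2).card
      = ∑ p ∈ T, ((if p.2 = [false] then 1 else 0) + 1) := by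
        refine Finset.sum_congr rfl fun p hp => ?_
        rw [locx0_card (hne p hp)]
        split <;> rfl
    _ = (T.filter (fun p => p.2 = [false])).card + T.card := by
        rw [Finset.sum_add_distrib, Finset.sum_const, smul_eq_mul, mul_one,
          Finset.card_filter]
    _ = _ := Nat.add_comm _ _

lemma compx0inv_card (hT : Represents g' T) (hne : ∀ p ∈ T, p.2 ≠ []) :
    (compT T locx0inv).card = T.card + (T.filter (fun p => p.2 = [true])).card := by
  classical
  rw [compT_card hT]
  calc ∑ p ∈ T, (locx0inv p.2).card
      = ∑ p ∈ T, ((if p.2 = [true] then 1 else 0) + 1) := by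
        refine Finset.sum_congr rfl fun p hp => ?_
        rw [locx0inv_card (hne p hp)]
        split <;> rfl
    _ = (T.filter (fun p => p.2 = [true])).card + T.card := by
        rw [Finset.sum_add_distrib, Finset.sum_const, smul_eq_mul, mul_one,
          Finset.card_filter]
    _ = _ := Nat.add_comm _ _

lemma represents_single (hT : Represents g' T) {p : List Bool × List Bool}
    (hp : p ∈ T) (h2 : p.2 = []) : ∀ ω, g' ω = ω := by
  have hall : ∀ q ∈ T, q = p := by
    intro q hq
    exact (ran_eq hT hp hq (by rw [h2]; exact List.nil_prefix)).symm
  have hp1 : p.1 = [] := by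
    rcases hp1 : p.1 with _ | ⟨c, l⟩
    · rfl
    · exfalso
      obtain ⟨q, ⟨hq, hqpre⟩, -⟩ := hT.1 (fun _ => !c)
      rw [hall q hq, hp1] at hqpre
      have := hqpre.eval (n := 0) (by simp)
      simp at this
  intro ω
  have := hT.rigid hp (ω := ω)
  rw [hp1, h2] at this
  simpa [app_nil] using this

end Cards
section Cases

variable {T : Finset (List Bool × List Bool)}

lemma compx0_cases (hne : ∀ p ∈ T, p.2 ≠ []) {d r : List Bool}
    (h : (d, r) ∈ compT T locx0) :
    (∃ a, (a, [false]) ∈ T ∧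
      ((d = a ++ [false] ∧ r = [false]) ∨ (d = a ++ [true] ∧ r = [true, false]))) ∨
    (∃ w, (d, false :: false :: w) ∈ T ∧ r = false :: w) ∨
    (∃ w, (d, false :: true :: w) ∈ T ∧ r = true :: false :: w) ∨
    (∃ w, (d, true :: w) ∈ T ∧ r = true :: true :: w) := by
  obtain ⟨p, hp, q, hq, heq⟩ := compT_mem.1 h
  obtain ⟨a, v⟩ := p
  have hvne : v ≠ [] := hne (a, v) hp
  rw [Prod.mk.injEq] at heq
  obtain ⟨h1, h2⟩ := heq
  match v, hvne with
  | [false], _ =>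
    simp only [locx0, Finset.mem_insert, Finset.mem_singleton] at hq
    rcases hq with rfl | rfl
    · exact Or.inl ⟨a, hp, Or.inl ⟨h1.symm, h2.symm⟩⟩
    · exact Or.inl ⟨a, hp, Or.inr ⟨h1.symm, h2.symm⟩⟩
  | false :: false :: w, _ =>
    simp only [locx0, Finset.mem_singleton] at hq
    subst hq
    simp only [List.append_nil] at h1
    subst h1
    exact Or.inr (Or.inl ⟨w, hp, h2.symm⟩)
  | false :: true :: w, _ =>
    simp only [locx0, Finset.mem_singleton] at hq
    subst hq
    simp only [List.append_nil] at h1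
    subst h1
    exact Or.inr (Or.inr (Or.inl ⟨w, hp, h2.symm⟩))
  | true :: w, _ =>
    simp only [locx0, Finset.mem_singleton] at hq
    subst hq
    simp only [List.append_nil] at h1
    subst h1
    exact Or.inr (Or.inr (Or.inr ⟨w, hp, h2.symm⟩))

end Cases
section BigRed

variable {g' : VPerm} {T : Finset (List Bool × List Bool)}

lemma compx0_reduced (hT : Represents g' T) (hRed : Reduced T)
    (hne : ∀ p ∈ T, p.2 ≠ []) {u₀ : List Bool} (h00 : (u₀, [false]) ∈ T) :
    Reduced (compT T locx0) := by
  rintro s t ⟨H0, H1⟩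
  rcases compx0_cases hne H1 with ⟨b, hbT, (⟨h1, h2⟩ | ⟨h1, h2⟩)⟩ |
    ⟨w1, hw1, hr1⟩ | ⟨w1, hw1, hr1⟩ | ⟨w1, hw1, hr1⟩
  · cases t <;> simp at h2
  · have h2' : t ++ [true] = [true] ++ [false] := by simpa using h2
    simpa using (concat_inj h2').2
  all_goals
    rcases compx0_cases hne H0 with ⟨a, haT, (⟨g1, g2⟩ | ⟨g1, g2⟩)⟩ |
      ⟨w0, hw0, hr0⟩ | ⟨w0, hw0, hr0⟩ | ⟨w0, hw0, hr0⟩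
  -- Block H1 = case 2 : t ++ [true] = false :: w1
  · -- H0 = 1a : t ++ [false] = [false]
    have ht : t = [] := by
      rcases t with _ | ⟨c, t⟩
      · rfl
      · simp at g2
    subst ht
    simp at hr1
  · -- H0 = 1b : s ++ [false] = a ++ [true]
    simpa using (concat_inj g1).2
  · -- H0 = 2
    rcases t with _ | ⟨c, t⟩
    · simp at hr1
    · simp only [List.cons_append, List.cons.injEq] at hr0 hr1
      obtain ⟨rfl, rfl⟩ := hr0
      obtain ⟨-, rfl⟩ := hr1
      exact hRed s (false :: false :: t) ⟨hw0, hw1⟩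
  · -- H0 = 3
    rcases t with _ | ⟨c, t⟩
    · simp at hr0
    · simp only [List.cons_append, List.cons.injEq] at hr0 hr1
      obtain ⟨rfl, -⟩ := hr0
      simp at hr1
  · -- H0 = 4
    rcases t with _ | ⟨c, t⟩
    · simp at hr0
    · simp only [List.cons_append, List.cons.injEq] at hr0 hr1
      obtain ⟨rfl, -⟩ := hr0
      simp at hr1
  -- Block H1 = case 3 : t ++ [true] = true :: false :: w1
  · -- H0 = 1a
    have ht : t = [] := by
      rcases t with _ | ⟨c, t⟩
      · rfl
      · simp at g2
    subst ht
    simp at hr1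
  · -- H0 = 1b
    simpa using (concat_inj g1).2
  · -- H0 = 2
    rcases t with _ | ⟨c, t⟩
    · simp at hr1
    · simp only [List.cons_append, List.cons.injEq] at hr0 hr1
      obtain ⟨rfl, -⟩ := hr0
      simp at hr1
  · -- H0 = 3
    rcases t with _ | ⟨c, t⟩
    · simp at hr0
    · simp only [List.cons_append, List.cons.injEq] at hr0 hr1
      obtain ⟨rfl, hr0'⟩ := hr0
      obtain ⟨-, hr1'⟩ := hr1
      rcases t with _ | ⟨c', t⟩
      · simp at hr1'
      · simp only [List.cons_append, List.cons.injEq] at hr0' hr1'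
        obtain ⟨rfl, rfl⟩ := hr0'
        obtain ⟨-, rfl⟩ := hr1'
        exact hRed s (false :: true :: t) ⟨hw0, hw1⟩
  · -- H0 = 4
    rcases t with _ | ⟨c, t⟩
    · simp at hr0
    · simp only [List.cons_append, List.cons.injEq] at hr0 hr1
      obtain ⟨rfl, hr0'⟩ := hr0
      obtain ⟨-, hr1'⟩ := hr1
      rcases t with _ | ⟨c', t⟩
      · simp at hr0'
      · simp only [List.cons_append, List.cons.injEq] at hr0' hr1'
        obtain ⟨rfl, -⟩ := hr0'
        simp at hr1'
  -- Block H1 = case 4 : t ++ [true] = true :: true :: w1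
  · -- H0 = 1a
    have ht : t = [] := by
      rcases t with _ | ⟨c, t⟩
      · rfl
      · simp at g2
    subst ht
    simp at hr1
  · -- H0 = 1b
    simpa using (concat_inj g1).2
  · -- H0 = 2
    rcases t with _ | ⟨c, t⟩
    · simp at hr1
    · simp only [List.cons_append, List.cons.injEq] at hr0 hr1
      obtain ⟨rfl, -⟩ := hr0
      simp at hr1
  · -- H0 = 3
    rcases t with _ | ⟨c, t⟩
    · simp at hr0
    · simp only [List.cons_append, List.cons.injEq] at hr0 hr1
      obtain ⟨rfl, hr0'⟩ := hr0
      obtain ⟨-, hr1'⟩ := hr1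
      rcases t with _ | ⟨c', t⟩
      · simp only [List.nil_append, List.cons.injEq] at hr0' hr1'
        obtain ⟨-, hr0''⟩ := hr0'
        obtain ⟨-, hr1''⟩ := hr1'
        -- w0 = [], w1 = []
        have hw0' : (s ++ [false], [false, true]) ∈ T := by
          rw [show ([false, true] : List Bool) = false :: true :: w0 by
            rw [← hr0'']]
          exact hw0
        have := ran_eq hT h00 hw0' ⟨[true], rfl⟩
        simpa using congrArg Prod.snd this
      · simp only [List.cons_append, List.cons.injEq] at hr0' hr1'
        obtain ⟨rfl, -⟩ := hr0'
        simp at hr1'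
  · -- H0 = 4
    rcases t with _ | ⟨c, t⟩
    · simp at hr0
    · simp only [List.cons_append, List.cons.injEq] at hr0 hr1
      obtain ⟨rfl, hr0'⟩ := hr0
      obtain ⟨-, hr1'⟩ := hr1
      rcases t with _ | ⟨c', t⟩
      · simp at hr0'
      · simp only [List.cons_append, List.cons.injEq] at hr0' hr1'
        obtain ⟨rfl, rfl⟩ := hr0'
        obtain ⟨-, rfl⟩ := hr1'
        exact hRed s (true :: t) ⟨hw0, hw1⟩

end BigRed
/-- For `g ∈ V` with `N(g) ≥ 4`:
`N(g)−1 ≤ N(g·x0) ≤ N(g)+1`; moreover if `ℓ0(g) = 1` then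
`N(g·x0) = N(g)+1` and `ℓ0(g·x0) = 1`.  (The paper's left-to-right product
`g·x0` is `g.trans x0`.) -/
theorem stmt3 (x0 : VPerm) (hx0 : Represents x0 x0T)
    (g : VPerm) (hg : InV g) (hN : 4 ≤ Nbr g) :
    (Nbr g - 1 ≤ Nbr (g.trans x0) ∧ Nbr (g.trans x0) ≤ Nbr g + 1) ∧
    (ell0 g = 1 → Nbr (g.trans x0) = Nbr g + 1 ∧ ell0 (g.trans x0) = 1) := by
  classical
  have hA : ∀ ω, x0 (app [false, false] ω) = app [false] ω :=
    fun ω => hx0.2.2 ([false, false], [false]) (by decide) ω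
  have hB : ∀ ω, x0 (app [false, true] ω) = app [true, false] ω :=
    fun ω => hx0.2.2 ([false, true], [true, false]) (by decide) ω
  have hC : ∀ ω, x0 (app [true] ω) = app [true, true] ω :=
    fun ω => hx0.2.2 ([true], [true, true]) (by decide) ω
  have hA' : ∀ ω, x0.symm (app [false] ω) = app [false, false] ω := fun ω => by
    rw [← hA ω, Equiv.symm_apply_apply]
  have hB' : ∀ ω, x0.symm (app [true, false] ω) = app [false, true] ω := fun ω => by
    rw [← hB ω, Equiv.symm_apply_apply]
  have hC' : ∀ ω, x0.symm (app [true, true] ω) = app [true] ω := fun ω => by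
    rw [← hC ω, Equiv.symm_apply_apply]
  obtain ⟨T₀, hT₀⟩ := hg
  obtain ⟨T, hT, hTr, -⟩ := exists_reduced hT₀
  have hNT : Nbr g = T.card := Nbr_eq_card hT hTr
  have hT4 : 4 ≤ T.card := by omega
  have hTne : ∀ p ∈ T, p.2 ≠ [] := ranges_ne_nil hT (by omega)
  have hrep' : Represents (g.trans x0) (compT T locx0) :=
    compT_represents hT (fun p hp => locx0_exu (hTne p hp))
      (fun p hp => locx0_rig hA hB hC (hTne p hp))
  have hcard' := compx0_card hT hTne
  have hfle := filter_range_card_le hT [false]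
  obtain ⟨T'', hrep'', hred'', hle''⟩ := exists_reduced hrep'
  have h3 : Nbr (g.trans x0) ≤ T''.card := Nat.sInf_le ⟨T'', hrep'', hred'', rfl⟩
  have hub : Nbr (g.trans x0) ≤ Nbr g + 1 := by omega
  have hSne : Set.Nonempty
      {n | ∃ Tt, Represents (g.trans x0) Tt ∧ Reduced Tt ∧ Tt.card = n} :=
    ⟨T''.card, T'', hrep'', hred'', rfl⟩
  obtain ⟨T₂, hT₂, hT₂r, hT₂c⟩ := Nat.sInf_mem hSne
  have hc2 : T₂.card = Nbr (g.trans x0) := hT₂c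
  have hlb : Nbr g ≤ Nbr (g.trans x0) + 1 := by
    by_cases hcor : ∃ p ∈ T₂, p.2 = []
    · obtain ⟨p, hp, hp2⟩ := hcor
      have hid := represents_single hT₂ hp hp2
      have hgx : g = x0.symm := by
        have hrefl : g.trans x0 = Equiv.refl CSeq := Equiv.ext hid
        have h5 : (g.trans x0).trans x0.symm = g := by ext ω; simp
        rw [← h5, hrefl]; ext ω; simp
      have hsw : Represents g (x0T.image Prod.swap) := hgx ▸ represents_symm hx0
      obtain ⟨T₄, h₄, r₄, le₄⟩ := exists_reduced hsw
      have h6 : Nbr g ≤ T₄.card := Nat.sInf_le ⟨T₄, h₄, r₄, rfl⟩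
      have h7 : (x0T.image Prod.swap).card ≤ 3 := by
        calc (x0T.image Prod.swap).card ≤ x0T.card := Finset.card_image_le
          _ = 3 := by decide
      omega
    · push_neg at hcor
      have hrep₂ : Represents ((g.trans x0).trans x0.symm) (compT T₂ locx0inv) :=
        compT_represents hT₂ (fun p hp => locx0inv_exu (hcor p hp))
          (fun p hp => locx0inv_rig hA' hB' hC' (hcor p hp))
      have hgid : (g.trans x0).trans x0.symm = g := by ext ω; simp
      rw [hgid] at hrep₂
      have hcard₂ := compx0inv_card hT₂ hcor
      have hfle₂ := filter_range_card_le hT₂ [true]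
      obtain ⟨T₃, h₃, r₃, le₃⟩ := exists_reduced hrep₂
      have h8 : Nbr g ≤ T₃.card := Nat.sInf_le ⟨T₃, h₃, r₃, rfl⟩
      omega
  refine ⟨⟨by omega, hub⟩, ?_⟩
  intro hell
  have hLne : Set.Nonempty
      {ℓ | 1 ≤ ℓ ∧ ∃ u, IsBranch g u (List.replicate ℓ false)} := by
    by_contra hemp
    rw [Set.not_nonempty_iff_eq_empty] at hemp
    have : ell0 g = 0 := by rw [ell0, hemp]; exact Nat.sInf_empty
    omega
  have h1L := Nat.sInf_mem hLne
  have h1L' : ell0 g ∈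
      {ℓ | 1 ≤ ℓ ∧ ∃ u, IsBranch g u (List.replicate ℓ false)} := h1L
  rw [hell] at h1L'
  obtain ⟨-, u₀, hbr⟩ := h1L'
  have h00 : (u₀, [false]) ∈ T := isBranch_mem hT hTr hbr
  have hredC : Reduced (compT T locx0) := compx0_reduced hT hTr hTne h00
  have hNeq : Nbr (g.trans x0) = (compT T locx0).card := Nbr_eq_card hrep' hredC
  have hfilter1 : (T.filter (fun p => p.2 = [false])).card = 1 := by
    refine le_antisymm hfle ?_
    exact Finset.card_pos.2 ⟨(u₀, [false]), Finset.mem_filter.2 ⟨h00, rfl⟩⟩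
  refine ⟨by omega, ?_⟩
  have hmem' : (u₀ ++ [false], [false]) ∈ compT T locx0 :=
    compT_mem.2 ⟨(u₀, [false]), h00, ([false], [false]), by simp [locx0], rfl⟩
  have hbr' : IsBranch (g.trans x0) (u₀ ++ [false]) (List.replicate 1 false) :=
    ⟨compT T locx0, hrep', hredC, hmem'⟩
  have h1mem : (1 : ℕ) ∈
      {ℓ | 1 ≤ ℓ ∧ ∃ u, IsBranch (g.trans x0) u (List.replicate ℓ false)} :=
    ⟨le_refl 1, u₀ ++ [false], hbr'⟩
  refine le_antisymm (Nat.sInf_le h1mem) ?_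
  exact (Nat.sInf_mem ⟨1, h1mem⟩).1
end

section
/- Let g be an element of Thompson's group V with N(g) ≥ 4 and ℓ0(g) ≠ 1. Then N(g·x0) = N(g) or N(g·x0) = N(g)−1, and ℓ0(g·x0) = ℓ0(g)−1. If, in addition, either the word 1 or the word 01 is a strict prefix of the range code of some branch of g, then N(g·x0) = N(g) and the word 1 is a strict prefix of the range code of some branch of g·x0. -/
namespace TV

lemma app_nil (ω : CSeq) : app [] ω = ω := by
  funext n; simp [app]

lemma app_append (a b : List Bool) (ω : CSeq) : app (a ++ b) ω = app a (app b ω) := by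
  funext n
  simp only [app, List.length_append]
  by_cases h1 : n < a.length
  · rw [dif_pos (by omega), dif_pos h1, List.getElem_append_left h1]
  · by_cases h2 : n < a.length + b.length
    · rw [dif_pos h2, dif_neg h1, dif_pos (by omega), List.getElem_append_right (by omega)]
    · rw [dif_neg h2, dif_neg h1, dif_neg (by omega)]
      congr 1; omega

lemma app_getElem {u : List Bool} {ω ω' : CSeq} (h : ω = app u ω') {i : ℕ}
    (hi : i < u.length) : ω i = u[i] := by
  rw [h]; simp [app, hi]

lemma app_past {u : List Bool} (ω' : CSeq) (n : ℕ) :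
    app u ω' (u.length + n) = ω' n := by
  simp [app]

lemma app_eq_of_forall {a b : List Bool} (h : ∀ ω, app a ω = app b ω) : a = b := by
  have h0 := h (fun _ => false)
  have h1 := h (fun _ => true)
  have hl : a.length = b.length := by
    by_contra hne
    rcases Nat.lt_or_ge a.length b.length with hlt | hge
    · have e0 := congrFun h0 a.length
      have e1 := congrFun h1 a.length
      simp only [app, dif_neg (lt_irrefl a.length), dif_pos hlt] at e0 e1
      rw [← e0] at e1; exact absurd e1 (by simp)
    · have hlt : b.length < a.length := by omega
      have e0 := congrFun h0 b.length
      have e1 := congrFun h1 b.length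
      simp only [app, dif_neg (lt_irrefl b.length), dif_pos hlt] at e0 e1
      rw [e0] at e1; exact absurd e1 (by simp)
  apply List.ext_getElem hl
  intro i hi hib
  have e0 := congrFun h0 i
  simp only [app, dif_pos hi, dif_pos hib] at e0
  exact e0

lemma isPref_app (u : List Bool) (ω : CSeq) : IsPref u (app u ω) := ⟨ω, rfl⟩

lemma isPref_mono {a b : List Bool} {ω : CSeq} (hab : a <+: b) (h : IsPref b ω) :
    IsPref a ω := by
  obtain ⟨c, rfl⟩ := hab
  obtain ⟨ω', rfl⟩ := h
  exact ⟨app c ω', app_append a c ω'⟩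

lemma isPref_comp {a b : List Bool} {ω : CSeq} (ha : IsPref a ω) (hb : IsPref b ω) :
    a <+: b ∨ b <+: a := by
  obtain ⟨ω₁, h₁⟩ := ha
  obtain ⟨ω₂, h₂⟩ := hb
  rcases le_or_gt a.length b.length with hl | hl
  · left
    have : a = b.take a.length := by
      apply List.ext_getElem (by simp [hl])
      intro i hi hi2
      have e1 := app_getElem h₁ hi
      have e2 := app_getElem h₂ (by omega : i < b.length)
      simp only [List.getElem_take]
      rw [← e1, ← e2]
    rw [this]; exact List.take_prefix _ _
  · right
    have : b = a.take b.length := by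
      apply List.ext_getElem (by simp; omega)
      intro i hi hi2
      have e1 := app_getElem h₂ hi
      have e2 := app_getElem h₁ (by omega : i < a.length)
      simp only [List.getElem_take]
      rw [← e1, ← e2]
    rw [this]; exact List.take_prefix _ _

lemma cons_head (ω : CSeq) : ω = app [ω 0] (fun n => ω (n + 1)) := by
  funext n
  cases n with
  | zero => simp [app]
  | succ m => simp [app]

lemma isPref_snoc {u : List Bool} {ω : CSeq} (h : IsPref u ω) :
    IsPref (u ++ [ω u.length]) ω := by
  obtain ⟨ω', rfl⟩ := h
  have hh : app u ω' u.length = ω' 0 := by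
    have := app_past (u := u) ω' 0
    simpa using this
  rw [hh]
  refine ⟨fun n => ω' (n + 1), ?_⟩
  rw [app_append, ← cons_head ω']

lemma isPref_const_false {v : List Bool} (h : IsPref v (fun _ => false)) :
    v = List.replicate v.length false := by
  apply List.eq_replicate_length.2
  intro b hb
  obtain ⟨i, hi, rfl⟩ := List.getElem_of_mem hb
  exact (app_getElem h.choose_spec hi).symm

lemma app_replicate_false (k : ℕ) :
    app (List.replicate k false) (fun _ => false) = (fun _ => false) := by
  funext n; simp only [app, List.length_replicate]
  split <;> simp

lemma prefix_of_strict_concat {a l : List Bool} {x : Bool}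
    (h : a <+: l ++ [x]) (hne : a ≠ l ++ [x]) : a <+: l := by
  obtain ⟨t, ht⟩ := h
  rcases List.eq_nil_or_concat' t with rfl | ⟨t', y, rfl⟩
  · simp at ht; exact absurd ht hne
  · rw [← List.append_assoc] at ht
    obtain ⟨h1, _⟩ := List.append_inj' ht rfl
    exact ⟨t', h1⟩

variable {g : VPerm} {T T' : Finset (List Bool × List Bool)}

lemma dom_unique (hT : Represents g T) {p q : List Bool × List Bool} {ω : CSeq}
    (hp : p ∈ T) (hq : q ∈ T) (h1 : IsPref p.1 ω) (h2 : IsPref q.1 ω) : p = q := by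
  obtain ⟨r, _, hun⟩ := hT.1 ω
  rw [hun p ⟨hp, h1⟩, hun q ⟨hq, h2⟩]

lemma ran_unique (hT : Represents g T) {p q : List Bool × List Bool} {ω : CSeq}
    (hp : p ∈ T) (hq : q ∈ T) (h1 : IsPref p.2 ω) (h2 : IsPref q.2 ω) : p = q := by
  obtain ⟨r, _, hun⟩ := hT.2.1 ω
  rw [hun p ⟨hp, h1⟩, hun q ⟨hq, h2⟩]

lemma branch_eq (hT : Represents g T) (hT' : Represents g T') {u v s v' : List Bool}
    (h : (u, v) ∈ T) (h' : (u ++ s, v') ∈ T') : v' = v ++ s := by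
  apply app_eq_of_forall
  intro ω
  have e1 := hT'.2.2 _ h' ω
  have e2 := hT.2.2 _ h (app s ω)
  simp only at e1 e2
  rw [app_append] at e1
  rw [app_append]
  rw [e1] at e2
  exact e2

lemma ran_eq (hT : Represents g T) (hT' : Represents g T') {u v v' : List Bool}
    (h : (u, v) ∈ T) (h' : (u, v') ∈ T') : v' = v := by
  have := branch_eq hT hT' (s := []) h (by simpa using h')
  simpa using this

lemma max_not_in (hT : Represents g T) (hR : Reduced T)
    (hT' : Represents g T') (hR' : Reduced T')
    {u v : List Bool} (huv : (u, v) ∈ T) (hnot : (u, v) ∉ T')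
    (hmax : ∀ q ∈ (T \ T') ∪ (T' \ T), q.1.length ≤ u.length) : False := by
  obtain ⟨p', ⟨hm', hp'⟩, _⟩ := hT'.1 (app u (fun _ => false))
  obtain ⟨u', v'⟩ := p'
  simp only at hp'
  rcases isPref_comp (isPref_app u _) hp' with hc | hc
  · rcases eq_or_ne u u' with rfl | hne
    · exact hnot (by rwa [ran_eq hT hT' huv hm'] at hm')
    · have hmem : (u', v') ∉ T := by
        intro hmem
        have h2 := dom_unique hT huv hmem
          (isPref_mono hc (isPref_app u' (fun _ => false))) (isPref_app u' _)
        exact hne (congrArg Prod.fst h2)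
      have hle := hmax (u', v')
        (Finset.mem_union_right _ (Finset.mem_sdiff.2 ⟨hm', hmem⟩))
      have hlt : u.length < u'.length :=
        lt_of_le_of_ne hc.length_le (fun h => hne (hc.eq_of_length h))
      simp only at hle
      omega
  · rcases eq_or_ne u' u with rfl | hne
    · exact hnot (by rwa [ran_eq hT hT' huv hm'] at hm')
    · obtain ⟨s, hs⟩ := hc
      rcases List.eq_nil_or_concat' s with rfl | ⟨t, b, rfl⟩
      · simp at hs; exact hne hs
      · have hu : u = (u' ++ t) ++ [b] := by rw [← hs]; simp
        set w := u' ++ t with hw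
        obtain ⟨p₂, ⟨hm₂, hp₂⟩, _⟩ := hT.1 (app (w ++ [!b]) (fun _ => false))
        obtain ⟨u₂, v₂⟩ := p₂
        simp only at hp₂
        have hu₂ : u₂ = w ++ [!b] := by
          rcases isPref_comp hp₂ (isPref_app _ _) with hc₂ | hc₂
          · by_contra hne₂
            have hpw : u₂ <+: w := prefix_of_strict_concat hc₂ hne₂
            have hpu : u₂ <+: u := by rw [hu]; exact hpw.trans (List.prefix_append _ _)
            have h2 := dom_unique hT hm₂ huv
              (isPref_mono hpu (isPref_app u (fun _ => false)))
              (isPref_app u (fun _ => false))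
            have h3 : u₂.length = u.length := by
              have := congrArg Prod.fst h2; simp at this; rw [this]
            have h4 := hpw.length_le
            rw [hu] at h3; simp at h3; omega
          · rcases eq_or_ne u₂ (w ++ [!b]) with h | hne₂
            · exact h
            exfalso
            have hlen : w.length + 1 < u₂.length := by
              have h4 := hc₂.length_le
              simp at h4
              rcases Nat.eq_or_lt_of_le h4 with h5 | h5
              · exact absurd (hc₂.eq_of_length (by simp; omega)).symm hne₂
              · omega
            have hmem₂ : (u₂, v₂) ∉ T' := by
              intro hmem₂
              have hpp : u' <+: u₂ :=
                ((List.prefix_append u' t).trans (List.prefix_append w [!b])).trans hc₂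
              have h2 := dom_unique hT' hmem₂ hm'
                (isPref_app u₂ (fun _ => false))
                (isPref_mono hpp (isPref_app u₂ (fun _ => false)))
              have h3 : u₂.length = u'.length := by
                have := congrArg Prod.fst h2; simp at this; rw [this]
              have : u'.length ≤ w.length := by simp [hw]
              omega
            have hle := hmax (u₂, v₂)
              (Finset.mem_union_left _ (Finset.mem_sdiff.2 ⟨hm₂, hmem₂⟩))
            simp only at hle
            rw [hu] at hle; simp at hle; omega
        have hvb : v = (v' ++ t) ++ [b] := by
          have h2 := branch_eq hT' hT hm' (show (u' ++ (t ++ [b]), v) ∈ T by rwa [hs])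
          rw [h2]; simp
        have hv₂ : v₂ = (v' ++ t) ++ [!b] := by
          have h2 := branch_eq hT' hT hm'
            (show (u' ++ (t ++ [!b]), v₂) ∈ T by
              rw [show u' ++ (t ++ [!b]) = u₂ by rw [hu₂, hw]; simp]; exact hm₂)
          rw [h2]; simp
        have hbmem : (w ++ [b], (v' ++ t) ++ [b]) ∈ T := by rw [← hu, ← hvb]; exact huv
        have hbmem₂ : (w ++ [!b], (v' ++ t) ++ [!b]) ∈ T := by
          rw [← hu₂, ← hv₂]; exact hm₂
        cases b
        · exact hR w (v' ++ t) ⟨hbmem, by simpa using hbmem₂⟩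
        · exact hR w (v' ++ t) ⟨by simpa using hbmem₂, hbmem⟩


lemma uniq (hT : Represents g T) (hR : Reduced T)
    (hT' : Represents g T') (hR' : Reduced T') : T = T' := by
  by_contra hne
  have hD : ((T \ T') ∪ (T' \ T)).Nonempty := by
    rw [Finset.nonempty_iff_ne_empty]
    intro h
    apply hne
    have h1 : T \ T' = ∅ := by
      rw [Finset.union_eq_empty] at h; exact h.1
    have h2 : T' \ T = ∅ := by
      rw [Finset.union_eq_empty] at h; exact h.2
    apply Finset.Subset.antisymm
    · intro x hx
      by_contra hx'
      have : x ∈ T \ T' := Finset.mem_sdiff.2 ⟨hx, hx'⟩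
      rw [h1] at this; exact absurd this (Finset.notMem_empty x)
    · intro x hx
      by_contra hx'
      have : x ∈ T' \ T := Finset.mem_sdiff.2 ⟨hx, hx'⟩
      rw [h2] at this; exact absurd this (Finset.notMem_empty x)
  obtain ⟨q, hq, hqmax⟩ := Finset.exists_max_image _ (fun p => p.1.length) hD
  rcases Finset.mem_union.1 hq with hq' | hq'
  · rw [Finset.mem_sdiff] at hq'
    exact max_not_in hT hR hT' hR' hq'.1 hq'.2 (fun r hr => hqmax r hr)
  · rw [Finset.mem_sdiff] at hq'
    refine max_not_in hT' hR' hT hR hq'.1 hq'.2 (fun r hr => hqmax r ?_)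
    rwa [Finset.union_comm]

lemma branch_mem (hT : Represents g T) (hR : Reduced T) {u v : List Bool} :
    IsBranch g u v ↔ (u, v) ∈ T := by
  constructor
  · rintro ⟨T₂, h₂, r₂, hm⟩
    rwa [uniq hT hR h₂ r₂]
  · intro h; exact ⟨T, hT, hR, h⟩

lemma Nbr_eq (hT : Represents g T) (hR : Reduced T) : Nbr g = T.card := by
  have hmem : T.card ∈ {n | ∃ T₂, Represents g T₂ ∧ Reduced T₂ ∧ T₂.card = n} :=
    ⟨T, hT, hR, rfl⟩
  have h2 := Nat.sInf_mem (⟨T.card, hmem⟩ :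
    {n | ∃ T₂, Represents g T₂ ∧ Reduced T₂ ∧ T₂.card = n}.Nonempty)
  obtain ⟨T₂, h₂, r₂, hc⟩ := h2
  rw [Nbr, ← hc, uniq hT hR h₂ r₂]

lemma ell0_eq (hT : Represents g T) (hR : Reduced T) {u : List Bool} {ℓ : ℕ}
    (hm : (u, List.replicate ℓ false) ∈ T) (h1 : 1 ≤ ℓ) : ell0 g = ℓ := by
  set E := {m | 1 ≤ m ∧ ∃ u', IsBranch g u' (List.replicate m false)} with hE
  have key : ∀ m ∈ E, m = ℓ := by
    rintro m ⟨hm1, u', hb⟩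
    rw [branch_mem hT hR] at hb
    have h2 := ran_unique hT hb hm
      (⟨fun _ => false, (app_replicate_false m).symm⟩)
      (⟨fun _ => false, (app_replicate_false ℓ).symm⟩)
    have h3 : List.replicate m false = List.replicate ℓ false := congrArg Prod.snd h2
    have := congrArg List.length h3
    simpa using this
  have hmem : ℓ ∈ E := ⟨h1, u, (branch_mem hT hR).2 hm⟩
  have := Nat.sInf_mem (⟨ℓ, hmem⟩ : E.Nonempty)
  rw [ell0]
  exact key _ this

lemma zero_branch (hT : Represents g T) :
    ∃ u ℓ, (u, List.replicate ℓ false) ∈ T := by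
  obtain ⟨⟨u, v⟩, ⟨hm, hp⟩, _⟩ := hT.2.1 (fun _ => false)
  simp only at hp
  exact ⟨u, v.length, by rwa [← isPref_const_false hp]⟩

lemma ran_ne_nil (hT : Represents g T) (hcard : 2 ≤ T.card)
    {u v : List Bool} (hm : (u, v) ∈ T) (hv : v = []) : False := by
  subst hv
  obtain ⟨q, hq, hqne⟩ := Finset.exists_mem_ne (show 1 < T.card by omega) ((u, []) : List Bool × List Bool)
  have := ran_unique hT hq hm
    (isPref_app q.2 (fun _ => false))
    (⟨app q.2 fun _ => false, (app_nil _).symm⟩)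
  exact hqne this

def psi : List Bool → List Bool
  | false :: false :: s => false :: s
  | false :: true :: s => true :: false :: s
  | true :: s => true :: true :: s
  | _ => []

lemma shape {v : List Bool} (h1 : v ≠ []) (h2 : v ≠ [false]) :
    (∃ s, v = false :: false :: s) ∨ (∃ s, v = false :: true :: s) ∨
    (∃ s, v = true :: s) := by
  match v with
  | [] => exact absurd rfl h1
  | [false] => exact absurd rfl h2
  | false :: false :: s => exact Or.inl ⟨s, rfl⟩
  | false :: true :: s => exact Or.inr (Or.inl ⟨s, rfl⟩)
  | true :: s => exact Or.inr (Or.inr ⟨s, rfl⟩)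

variable {x0 g : VPerm} {T : Finset (List Bool × List Bool)}

lemma psi_spec (hx0 : Represents x0 x0T) {v : List Bool} (h1 : v ≠ [])
    (h2 : v ≠ [false]) (ω : CSeq) : x0 (app v ω) = app (psi v) ω := by
  have k00 : ∀ σ, x0 (app [false, false] σ) = app [false] σ :=
    fun σ => hx0.2.2 ([false, false], [false]) (by simp [x0T]) σ
  have k01 : ∀ σ, x0 (app [false, true] σ) = app [true, false] σ :=
    fun σ => hx0.2.2 ([false, true], [true, false]) (by simp [x0T]) σ
  have k1 : ∀ σ, x0 (app [true] σ) = app [true, true] σ :=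
    fun σ => hx0.2.2 ([true], [true, true]) (by simp [x0T]) σ
  rcases shape h1 h2 with ⟨s, rfl⟩ | ⟨s, rfl⟩ | ⟨s, rfl⟩
  · show x0 (app ([false, false] ++ s) ω) = app ([false] ++ s) ω
    rw [app_append, app_append]; exact k00 _
  · show x0 (app ([false, true] ++ s) ω) = app ([true, false] ++ s) ω
    rw [app_append, app_append]; exact k01 _
  · show x0 (app ([true] ++ s) ω) = app ([true, true] ++ s) ω
    rw [app_append, app_append]; exact k1 _

lemma rep_T' (hx0 : Represents x0 x0T) (hT : Represents g T)
    (hv : ∀ p ∈ T, p.2 ≠ [] ∧ p.2 ≠ [false]) :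
    Represents (g.trans x0) (T.image (fun p => (p.1, psi p.2))) := by
  refine ⟨?_, ?_, ?_⟩
  · intro ω
    obtain ⟨p, ⟨hp, hpref⟩, hup⟩ := hT.1 ω
    refine ⟨(p.1, psi p.2), ⟨Finset.mem_image_of_mem _ hp, hpref⟩, ?_⟩
    rintro q ⟨hq, hqpref⟩
    obtain ⟨r, hr, rfl⟩ := Finset.mem_image.1 hq
    rw [hup r ⟨hr, hqpref⟩]
  · intro ω
    obtain ⟨p, ⟨hp, hpref⟩, hup⟩ := hT.2.1 (x0.symm ω)
    obtain ⟨ρ, hρ⟩ := hpref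
    have him : ω = app (psi p.2) ρ := by
      have h2 : x0 (x0.symm ω) = ω := x0.apply_symm_apply ω
      rw [← h2, hρ, psi_spec hx0 (hv p hp).1 (hv p hp).2]
    refine ⟨(p.1, psi p.2), ⟨Finset.mem_image_of_mem _ hp, ⟨ρ, him⟩⟩, ?_⟩
    rintro q ⟨hq, hqpref⟩
    obtain ⟨r, hr, rfl⟩ := Finset.mem_image.1 hq
    obtain ⟨σ, hσ⟩ := hqpref
    have hτ : x0.symm ω = app r.2 σ := by
      have h3 := psi_spec hx0 (hv r hr).1 (hv r hr).2 σ
      have h2 : x0 (app r.2 σ) = ω := by rw [h3, ← hσ]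
      rw [← h2, Equiv.symm_apply_apply]
    rw [hup r ⟨hr, ⟨σ, hτ⟩⟩]
  · rintro q hq ω
    obtain ⟨r, hr, rfl⟩ := Finset.mem_image.1 hq
    simp only [Equiv.trans_apply]
    rw [hT.2.2 r hr ω, psi_spec hx0 (hv r hr).1 (hv r hr).2]

lemma card_T' (hT : Represents g T) :
    (T.image (fun p => (p.1, psi p.2))).card = T.card := by
  apply Finset.card_image_of_injOn
  intro p hp q hq h
  simp only [Prod.mk.injEq] at h
  exact dom_unique hT hp hq (isPref_app p.1 (fun _ => false))
    (h.1 ▸ isPref_app p.1 (fun _ => false))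

lemma classify (hT : Represents g T) (hR : Reduced T)
    (hv : ∀ p ∈ T, p.2 ≠ [] ∧ p.2 ≠ [false]) {a b : List Bool}
    (h0 : (a ++ [false], b ++ [false]) ∈ T.image (fun p => (p.1, psi p.2)))
    (h1 : (a ++ [true], b ++ [true]) ∈ T.image (fun p => (p.1, psi p.2))) :
    b = [true] ∧ (a ++ [false], [false, true]) ∈ T ∧ (a ++ [true], [true]) ∈ T := by
  obtain ⟨⟨u₀, v₀⟩, hp₀, he₀⟩ := Finset.mem_image.1 h0
  obtain ⟨⟨u₁, v₁⟩, hp₁, he₁⟩ := Finset.mem_image.1 h1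
  simp only [Prod.mk.injEq] at he₀ he₁
  obtain ⟨hu₀, hv₀⟩ := he₀
  obtain ⟨hu₁, hv₁⟩ := he₁
  subst hu₀; subst hu₁
  rcases b with _ | ⟨c, b'⟩
  · exfalso
    rcases shape (hv _ hp₁).1 (hv _ hp₁).2 with ⟨s₁, rfl⟩ | ⟨s₁, rfl⟩ | ⟨s₁, rfl⟩ <;>
      simp [psi] at hv₁
  · cases c
    · exfalso
      rcases shape (hv _ hp₀).1 (hv _ hp₀).2 with ⟨s₀, rfl⟩ | ⟨s₀, rfl⟩ | ⟨s₀, rfl⟩ <;>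
        simp [psi] at hv₀
      rcases shape (hv _ hp₁).1 (hv _ hp₁).2 with ⟨s₁, rfl⟩ | ⟨s₁, rfl⟩ | ⟨s₁, rfl⟩ <;>
        simp [psi] at hv₁
      subst hv₀; subst hv₁
      exact hR a (false :: false :: b') ⟨by simpa using hp₀, by simpa using hp₁⟩
    · rcases b' with _ | ⟨d, b''⟩
      · rcases shape (hv _ hp₀).1 (hv _ hp₀).2 with ⟨s₀, rfl⟩ | ⟨s₀, rfl⟩ | ⟨s₀, rfl⟩ <;>
          simp [psi] at hv₀
        rcases shape (hv _ hp₁).1 (hv _ hp₁).2 with ⟨s₁, rfl⟩ | ⟨s₁, rfl⟩ | ⟨s₁, rfl⟩ <;>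
          simp [psi] at hv₁
        subst hv₀; subst hv₁
        exact ⟨rfl, hp₀, hp₁⟩
      · exfalso
        cases d
        · rcases shape (hv _ hp₀).1 (hv _ hp₀).2 with ⟨s₀, rfl⟩ | ⟨s₀, rfl⟩ | ⟨s₀, rfl⟩ <;>
            simp [psi] at hv₀
          rcases shape (hv _ hp₁).1 (hv _ hp₁).2 with ⟨s₁, rfl⟩ | ⟨s₁, rfl⟩ | ⟨s₁, rfl⟩ <;>
            simp [psi] at hv₁
          subst hv₀; subst hv₁
          exact hR a (false :: true :: b'') ⟨by simpa using hp₀, by simpa using hp₁⟩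
        · rcases shape (hv _ hp₀).1 (hv _ hp₀).2 with ⟨s₀, rfl⟩ | ⟨s₀, rfl⟩ | ⟨s₀, rfl⟩ <;>
            simp [psi] at hv₀
          rcases shape (hv _ hp₁).1 (hv _ hp₁).2 with ⟨s₁, rfl⟩ | ⟨s₁, rfl⟩ | ⟨s₁, rfl⟩ <;>
            simp [psi] at hv₁
          subst hv₀; subst hv₁
          exact hR a (true :: b'') ⟨by simpa using hp₀, by simpa using hp₁⟩


lemma hsp_case (hx0 : Represents x0 x0T) (hT : Represents g T) (hR : Reduced T)
    (hv : ∀ p ∈ T, p.2 ≠ [] ∧ p.2 ≠ [false]) (hcard : 4 ≤ T.card)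
    {p : List Bool} (hp0 : (p ++ [false], [false, true]) ∈ T)
    (hp1 : (p ++ [true], [true]) ∈ T) :
    Represents (g.trans x0)
      (insert (p, [true])
        (((T.image (fun p => (p.1, psi p.2))).erase (p ++ [false], [true, false])).erase
          (p ++ [true], [true, true]))) ∧
    Reduced
      (insert (p, [true])
        (((T.image (fun p => (p.1, psi p.2))).erase (p ++ [false], [true, false])).erase
          (p ++ [true], [true, true]))) ∧
    (insert (p, [true])
        (((T.image (fun p => (p.1, psi p.2))).erase (p ++ [false], [true, false])).erase
          (p ++ [true], [true, true]))).card = T.card - 1 := by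
  set T' := T.image (fun p => (p.1, psi p.2)) with hT'def
  set q₀ : List Bool × List Bool := (p ++ [false], [true, false]) with hq₀def
  set q₁ : List Bool × List Bool := (p ++ [true], [true, true]) with hq₁def
  set T'' := insert (p, [true]) ((T'.erase q₀).erase q₁) with hT''def
  have hrep' := rep_T' hx0 hT hv
  have hq₀T' : q₀ ∈ T' := Finset.mem_image.2 ⟨(p ++ [false], [false, true]), hp0, rfl⟩
  have hq₁T' : q₁ ∈ T' := Finset.mem_image.2 ⟨(p ++ [true], [true]), hp1, rfl⟩
  have hmem'' : ∀ r, r ∈ T'' ↔ r = (p, [true]) ∨ (r ∈ T' ∧ r ≠ q₀ ∧ r ≠ q₁) := by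
    intro r
    simp only [hT''def, Finset.mem_insert, Finset.mem_erase]
    tauto
  have hpnot : (p, [true]) ∉ T' := by
    intro h
    have h2 := dom_unique hrep' h hq₀T'
      (isPref_mono (List.prefix_append p [false]) (isPref_app (p ++ [false]) (fun _ => false)))
      (isPref_app (p ++ [false]) (fun _ => false))
    have h3 : p = p ++ [false] := congrArg Prod.fst h2
    have := congrArg List.length h3
    simp at this
  -- cardinality
  have hcard'' : T''.card = T.card - 1 := by
    have hq01 : q₁ ≠ q₀ := by simp [hq₀def, hq₁def]
    have c1 : (T'.erase q₀).card = T'.card - 1 := Finset.card_erase_of_mem hq₀T'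
    have c2 : ((T'.erase q₀).erase q₁).card = T'.card - 2 := by
      rw [Finset.card_erase_of_mem (Finset.mem_erase.2 ⟨hq01, hq₁T'⟩), c1]
      omega
    have hnotin : (p, [true]) ∉ (T'.erase q₀).erase q₁ :=
      fun h => hpnot (Finset.mem_of_mem_erase (Finset.mem_of_mem_erase h))
    have := Finset.card_insert_of_notMem hnotin
    rw [hT''def, this, c2, card_T' hT]
    have := card_T' (g := g) hT
    omega
  have hrep'' : Represents (g.trans x0) T'' := by
    refine ⟨?_, ?_, ?_⟩
    · -- domain codes
      intro ω
      by_cases hpω : IsPref p ω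
      · refine ⟨(p, [true]), ⟨(hmem'' _).2 (Or.inl rfl), hpω⟩, ?_⟩
        rintro r ⟨hr, hrpref⟩
        rcases (hmem'' _).1 hr with rfl | ⟨hrT', hne₀, hne₁⟩
        · rfl
        exfalso
        have hsnoc := isPref_snoc hpω
        cases hb : ω p.length
        · rw [hb] at hsnoc
          exact hne₀ (dom_unique hrep' hrT' hq₀T' hrpref hsnoc)
        · rw [hb] at hsnoc
          exact hne₁ (dom_unique hrep' hrT' hq₁T' hrpref hsnoc)
      · obtain ⟨r, ⟨hrT', hrpref⟩, hur⟩ := hrep'.1 ω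
        have hne₀ : r ≠ q₀ := by
          rintro rfl
          exact hpω (isPref_mono (List.prefix_append p [false]) hrpref)
        have hne₁ : r ≠ q₁ := by
          rintro rfl
          exact hpω (isPref_mono (List.prefix_append p [true]) hrpref)
        refine ⟨r, ⟨(hmem'' _).2 (Or.inr ⟨hrT', hne₀, hne₁⟩), hrpref⟩, ?_⟩
        rintro r' ⟨hr', hrpref'⟩
        rcases (hmem'' _).1 hr' with rfl | ⟨hrT'', _, _⟩
        · exact absurd hrpref' hpω
        · exact hur r' ⟨hrT'', hrpref'⟩
    · -- range codes
      intro ω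
      by_cases htω : IsPref [true] ω
      · refine ⟨(p, [true]), ⟨(hmem'' _).2 (Or.inl rfl), htω⟩, ?_⟩
        rintro r ⟨hr, hrpref⟩
        rcases (hmem'' _).1 hr with rfl | ⟨hrT', hne₀, hne₁⟩
        · rfl
        exfalso
        have hsnoc := isPref_snoc htω
        cases hb : ω 1
        · rw [show ([true] : List Bool).length = 1 from rfl, hb] at hsnoc
          exact hne₀ (ran_unique hrep' hrT' hq₀T' hrpref hsnoc)
        · rw [show ([true] : List Bool).length = 1 from rfl, hb] at hsnoc
          exact hne₁ (ran_unique hrep' hrT' hq₁T' hrpref hsnoc)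
      · obtain ⟨r, ⟨hrT', hrpref⟩, hur⟩ := hrep'.2.1 ω
        have hne₀ : r ≠ q₀ := by
          rintro rfl
          exact htω (isPref_mono ⟨[false], rfl⟩ hrpref)
        have hne₁ : r ≠ q₁ := by
          rintro rfl
          exact htω (isPref_mono ⟨[true], rfl⟩ hrpref)
        refine ⟨r, ⟨(hmem'' _).2 (Or.inr ⟨hrT', hne₀, hne₁⟩), hrpref⟩, ?_⟩
        rintro r' ⟨hr', hrpref'⟩
        rcases (hmem'' _).1 hr' with rfl | ⟨hrT'', _, _⟩
        · exact absurd hrpref' htω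
        · exact hur r' ⟨hrT'', hrpref'⟩
    · -- branch equations
      rintro r hr ω
      rcases (hmem'' _).1 hr with rfl | ⟨hrT', _, _⟩
      · show (g.trans x0) (app p ω) = app [true] ω
        have hdec : app p ω = app (p ++ [ω 0]) (fun n => ω (n + 1)) := by
          rw [app_append, ← cons_head ω]
        have hω : ω = app [ω 0] (fun n => ω (n + 1)) := cons_head ω
        cases hb : ω 0
        · rw [hb] at hdec hω
          rw [hdec, Equiv.trans_apply, hT.2.2 _ hp0 (fun n => ω (n + 1)),
            psi_spec hx0 (by simp) (by simp) (fun n => ω (n + 1))]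
          show app ([true] ++ [false]) (fun n => ω (n + 1)) = app [true] ω
          rw [app_append, ← hω]
        · rw [hb] at hdec hω
          rw [hdec, Equiv.trans_apply, hT.2.2 _ hp1 (fun n => ω (n + 1)),
            psi_spec hx0 (by simp) (by simp) (fun n => ω (n + 1))]
          show app ([true] ++ [true]) (fun n => ω (n + 1)) = app [true] ω
          rw [app_append, ← hω]
      · exact hrep'.2.2 r hrT' ω
  refine ⟨hrep'', ?_, hcard''⟩
  -- reducedness
  rintro a b ⟨h0, h1⟩
  rcases (hmem'' _).1 h0 with he0 | ⟨hm0, hne00, hne01⟩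
  · -- b ++ [false] = [true], impossible
    have : b ++ [false] = [true] := congrArg Prod.snd he0
    rcases b with _ | ⟨c, b'⟩ <;> simp at this
  rcases (hmem'' _).1 h1 with he1 | ⟨hm1, hne10, hne11⟩
  · -- pair is (a++[false],[false]) and (a++[true],[true]); card contradiction
    have hb : b = [] := by
      have : b ++ [true] = [true] := congrArg Prod.snd he1
      rcases b with _ | ⟨c, b'⟩
      · rfl
      · simp at this
    subst hb
    have h1m : (a ++ [true], ([] : List Bool) ++ [true]) ∈ T'' := h1
    have hsub : T'' ⊆ {(a ++ [false], [false]), (a ++ [true], [true])} := by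
      intro r hr
      have hprefr := isPref_app r.2 (fun _ => false)
      set ω := app r.2 (fun _ => false) with hωdef
      have hhead : IsPref [ω 0] ω := ⟨fun n => ω (n + 1), cons_head ω⟩
      simp only [Finset.mem_insert, Finset.mem_singleton]
      cases hb2 : ω 0
      · left
        rw [hb2] at hhead
        exact ran_unique hrep'' hr h0 hprefr hhead
      · right
        rw [hb2] at hhead
        exact ran_unique hrep'' hr h1m hprefr hhead
    have hle := Finset.card_le_card hsub
    have : ({(a ++ [false], [false]), (a ++ [true], [true])} :
        Finset (List Bool × List Bool)).card ≤ 2 :=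
      Finset.card_insert_le _ _ |>.trans (by simp)
    omega
  · -- both in T'; classification forces the erased pair
    obtain ⟨hb, hf, ht⟩ := classify hT hR hv hm0 hm1
    subst hb
    apply hne00
    exact ran_unique hrep' hm0 hq₀T'
      (isPref_app _ (fun _ => false)) (isPref_app _ (fun _ => false))

end TV

open TV (psi)

/-- For `g ∈ V` with `N(g) ≥ 4` and `ℓ0(g) ≠ 1`:
`N(g·x0) ∈ {N(g), N(g)−1}` and `ℓ0(g·x0) = ℓ0(g)−1`; if in addition `1` or
`01` is a strict prefix of the range code of some branch of `g`, then
`N(g·x0) = N(g)` and `1` is a strict prefix of the range code of some branch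
of `g·x0`. -/
theorem stmt4 (x0 : VPerm) (hx0 : Represents x0 x0T)
    (g : VPerm) (hg : InV g) (hN : 4 ≤ Nbr g) (hl : ell0 g ≠ 1) :
    ((Nbr (g.trans x0) = Nbr g ∨ Nbr (g.trans x0) = Nbr g - 1) ∧
      ell0 (g.trans x0) = ell0 g - 1) ∧
    ((StrictPrefOfBranch g [true] ∨ StrictPrefOfBranch g [false, true]) →
      Nbr (g.trans x0) = Nbr g ∧ StrictPrefOfBranch (g.trans x0) [true]) := by
  classical
  have hSne : {n | ∃ T, Represents g T ∧ Reduced T ∧ T.card = n}.Nonempty := by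
    by_contra h
    rw [Set.not_nonempty_iff_eq_empty] at h
    rw [Nbr, h, Nat.sInf_empty] at hN
    omega
  obtain ⟨T, hT, hR, hTcard⟩ := Nat.sInf_mem hSne
  have hNbr := TV.Nbr_eq hT hR
  have hcard4 : 4 ≤ T.card := hNbr ▸ hN
  have hv : ∀ p ∈ T, p.2 ≠ [] ∧ p.2 ≠ [false] := by
    intro p hp
    constructor
    · intro h
      exact TV.ran_ne_nil hT (by omega) (show (p.1, p.2) ∈ T by rw [Prod.mk.eta]; exact hp) h
    · intro h
      apply hl
      exact TV.ell0_eq hT hR (u := p.1) (ℓ := 1)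
        (show (p.1, List.replicate 1 false) ∈ T by
          rw [show List.replicate 1 false = [false] from rfl, ← h, Prod.mk.eta]; exact hp)
        le_rfl
  obtain ⟨u₀, ℓ, hz⟩ := TV.zero_branch hT
  have hℓ1 : 1 ≤ ℓ := by
    by_contra h
    have h0 : ℓ = 0 := by omega
    subst h0
    exact (hv _ hz).1 rfl
  have hell : ell0 g = ℓ := TV.ell0_eq hT hR hz hℓ1
  have hℓ2 : 2 ≤ ℓ := by
    rcases Nat.lt_or_ge ℓ 2 with h | h
    · exfalso; apply hl; rw [hell]; omega
    · exact h
  have hpsirep : psi (List.replicate ℓ false) = List.replicate (ℓ - 1) false := by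
    obtain ⟨k, rfl⟩ : ∃ k, ℓ = k + 2 := ⟨ℓ - 2, by omega⟩
    show psi (List.replicate (k + 2) false) = List.replicate (k + 1) false
    simp [List.replicate_succ, psi]
  have hrep' := TV.rep_T' hx0 hT hv
  have hzmem' : (u₀, List.replicate (ℓ - 1) false) ∈ T.image (fun p => (p.1, psi p.2)) :=
    Finset.mem_image.2 ⟨(u₀, List.replicate ℓ false), hz, by rw [hpsirep]⟩
  by_cases hsp : ∃ p, (p ++ [false], [false, true]) ∈ T ∧ (p ++ [true], [true]) ∈ T
  · obtain ⟨p, hp0, hp1⟩ := hsp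
    obtain ⟨hrep'', hred'', hcard''⟩ := TV.hsp_case hx0 hT hR hv hcard4 hp0 hp1
    have hNbr'' : Nbr (g.trans x0) = T.card - 1 := by
      rw [TV.Nbr_eq hrep'' hred'', hcard'']
    have hz'' : (u₀, List.replicate (ℓ - 1) false) ∈
        insert (p, [true])
          (((T.image (fun p => (p.1, psi p.2))).erase (p ++ [false], [true, false])).erase
            (p ++ [true], [true, true])) := by
      apply Finset.mem_insert_of_mem
      refine Finset.mem_erase.2 ⟨?_, Finset.mem_erase.2 ⟨?_, hzmem'⟩⟩
      · intro h
        have h2 := congrArg Prod.snd h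
        obtain ⟨k, hk⟩ : ∃ k, ℓ - 1 = k + 1 := ⟨ℓ - 2, by omega⟩
        rw [hk] at h2
        simp [List.replicate_succ] at h2
      · intro h
        have h2 := congrArg Prod.snd h
        obtain ⟨k, hk⟩ : ∃ k, ℓ - 1 = k + 1 := ⟨ℓ - 2, by omega⟩
        rw [hk] at h2
        simp [List.replicate_succ] at h2
    have hell'' : ell0 (g.trans x0) = ℓ - 1 :=
      TV.ell0_eq hrep'' hred'' hz'' (by omega)
    refine ⟨⟨Or.inr (by rw [hNbr'', hNbr]), by rw [hell'', hell]⟩, ?_⟩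
    rintro (⟨u, v, hbr, hpref, hne⟩ | ⟨u, v, hbr, hpref, hne⟩)
    · exfalso
      rw [TV.branch_mem hT hR] at hbr
      have h2 := TV.ran_unique hT hbr hp1 (TV.isPref_app v (fun _ => false))
        (TV.isPref_mono hpref (TV.isPref_app v (fun _ => false)))
      exact hne (congrArg Prod.snd h2).symm
    · exfalso
      rw [TV.branch_mem hT hR] at hbr
      have h2 := TV.ran_unique hT hbr hp0 (TV.isPref_app v (fun _ => false))
        (TV.isPref_mono hpref (TV.isPref_app v (fun _ => false)))
      exact hne (congrArg Prod.snd h2).symm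
  · have hred' : Reduced (T.image (fun p => (p.1, psi p.2))) := by
      rintro a b ⟨h0, h1⟩
      obtain ⟨_, hf, ht⟩ := TV.classify hT hR hv h0 h1
      exact hsp ⟨a, hf, ht⟩
    have hNbr' : Nbr (g.trans x0) = T.card := by
      rw [TV.Nbr_eq hrep' hred', TV.card_T' hT]
    have hell' : ell0 (g.trans x0) = ℓ - 1 :=
      TV.ell0_eq hrep' hred' hzmem' (by omega)
    refine ⟨⟨Or.inl (by rw [hNbr', hNbr]), by rw [hell', hell]⟩, ?_⟩
    intro hstr
    refine ⟨by rw [hNbr', hNbr], ?_⟩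
    rcases hstr with ⟨u, v, hbr, hpref, hne⟩ | ⟨u, v, hbr, hpref, hne⟩
    · rw [TV.branch_mem hT hR] at hbr
      obtain ⟨s, rfl⟩ := hpref
      refine ⟨u, psi ([true] ++ s),
        (TV.branch_mem hrep' hred').2 (Finset.mem_image_of_mem _ hbr), ?_, ?_⟩
      · exact ⟨true :: s, rfl⟩
      · simp [psi]
    · rw [TV.branch_mem hT hR] at hbr
      obtain ⟨s, rfl⟩ := hpref
      refine ⟨u, psi ([false, true] ++ s),
        (TV.branch_mem hrep' hred').2 (Finset.mem_image_of_mem _ hbr), ?_, ?_⟩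
      · exact ⟨false :: s, rfl⟩
      · simp [psi]
end

section
/- Let g be an element of Thompson's group V, let u → v be a branch of g, let h be an element of Thompson's group F, and let h' = h_{[v]} be the copy of h in F_{[v]}. Then N(g·h') = N(g) + N(h) − 1. Moreover, if w_1 → z_1, …, w_k → z_k are the branches of h, then the reduced representation of g·h' consists exactly of the branches u·w_i → v·z_i (i = 1,…,k) together with all branches of g other than u → v. -/
namespace S8

lemma app_nil (ω : CSeq) : app [] ω = ω := by
  funext n; simp [app]

lemma app_at_ge (u : List Bool) (ω : CSeq) (n : ℕ) (h : u.length ≤ n) :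
    app u ω n = ω (n - u.length) := by
  simp [app, Nat.not_lt.2 h]

lemma app_at_add (u : List Bool) (ω : CSeq) (n : ℕ) :
    app u ω (n + u.length) = ω n := by
  rw [app_at_ge u ω _ (Nat.le_add_left _ _), Nat.add_sub_cancel]

lemma app_at_lt (u : List Bool) (ω : CSeq) (n : ℕ) (h : n < u.length) :
    app u ω n = u[n] := by
  simp [app, h]

lemma app_cancel {u : List Bool} {ω ω' : CSeq} (h : app u ω = app u ω') : ω = ω' := by
  funext n
  have := congrFun h (n + u.length)
  rwa [app_at_add, app_at_add] at this

lemma app_append (u s : List Bool) (ω : CSeq) :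
    app (u ++ s) ω = app u (app s ω) := by
  funext n
  rcases lt_or_ge n u.length with h | h
  · rw [app_at_lt _ _ _ h, app_at_lt _ _ _ (by simp; omega)]
    rw [List.getElem_append_left h]
  · rw [app_at_ge u _ _ h]
    rcases lt_or_ge n (u.length + s.length) with h2 | h2
    · rw [app_at_lt _ _ _ (by simp; omega), app_at_lt _ _ _ (by omega)]
      rw [List.getElem_append_right (by omega)]
    · rw [app_at_ge _ _ _ (by simp; omega), app_at_ge _ _ _ (by omega)]
      congr 1
      simp; omega

lemma word_ext {b c : List Bool} (h : ∀ ω, app b ω = app c ω) : b = c := by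
  have hlen : ∀ (b c : List Bool), (∀ ω, app b ω = app c ω) → b.length ≤ c.length := by
    intro b c h
    by_contra hl
    push_neg at hl
    have hc : c.length < b.length := hl
    have := congrFun (h (fun _ => !b[c.length])) c.length
    rw [app_at_lt _ _ _ hc, app_at_ge c _ _ (le_refl _)] at this
    simp at this
  have h1 := hlen b c h
  have h2 := hlen c b (fun ω => (h ω).symm)
  apply List.ext_getElem (le_antisymm h1 h2)
  intro i hi hi'
  have := congrFun (h (fun _ => false)) i
  rwa [app_at_lt _ _ _ hi, app_at_lt _ _ _ hi'] at this

lemma isPref_iff {u : List Bool} {ω : CSeq} :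
    IsPref u ω ↔ ∀ i (h : i < u.length), ω i = u[i] := by
  constructor
  · rintro ⟨ω', rfl⟩ i h
    exact app_at_lt _ _ _ h
  · intro h
    refine ⟨fun n => ω (n + u.length), ?_⟩
    funext n
    rcases lt_or_ge n u.length with h2 | h2
    · rw [app_at_lt _ _ _ h2]; exact h n h2
    · rw [app_at_ge _ _ _ h2]
      congr 1; omega

lemma isPref_nil (ω : CSeq) : IsPref [] ω := ⟨ω, (app_nil ω).symm⟩

lemma isPref_self (u : List Bool) (ω : CSeq) : IsPref u (app u ω) := ⟨ω, rfl⟩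

lemma prefix_of_isPref_le {s t : List Bool} {ω : CSeq} (hs : IsPref s ω)
    (ht : IsPref t ω) (hl : s.length ≤ t.length) : s <+: t := by
  rw [isPref_iff] at hs ht
  rw [List.prefix_iff_eq_take]
  apply List.ext_getElem (by simp [hl]) (fun i hi hi' => ?_)
  rw [List.getElem_take]
  rw [← hs i hi, ht i (by simp at hi'; omega)]

lemma isPref_comparable {s t : List Bool} {ω : CSeq} (hs : IsPref s ω)
    (ht : IsPref t ω) : s <+: t ∨ t <+: s := by
  rcases le_total s.length t.length with h | h
  · exact Or.inl (prefix_of_isPref_le hs ht h)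
  · exact Or.inr (prefix_of_isPref_le ht hs h)

lemma isPref_of_prefix {s t : List Bool} {ω : CSeq} (h : s <+: t) (ht : IsPref t ω) :
    IsPref s ω := by
  obtain ⟨r, rfl⟩ := h
  obtain ⟨ω', rfl⟩ := ht
  exact ⟨app r ω', by rw [app_append]⟩

lemma isPref_app_of_prefix {s t : List Bool} (h : s <+: t) (ω : CSeq) :
    IsPref s (app t ω) := isPref_of_prefix h (isPref_self t ω)

lemma isPref_append_iff {u w : List Bool} {ω : CSeq} :
    IsPref (u ++ w) (app u ω) ↔ IsPref w ω := by
  constructor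
  · rintro ⟨ω', h⟩
    rw [app_append] at h
    exact ⟨ω', app_cancel h⟩
  · rintro ⟨ω', rfl⟩
    exact ⟨ω', by rw [app_append]⟩

lemma app_cons_tail (u : List Bool) (ω : CSeq) :
    app u ω = app (u ++ [ω 0]) (fun n => ω (n + 1)) := by
  funext n
  rcases lt_or_ge n u.length with h | h
  · rw [app_at_lt _ _ _ h, app_at_lt _ _ _ (by simp; omega), List.getElem_append_left h]
  · rcases eq_or_lt_of_le h with h2 | h2
    · subst h2
      rw [app_at_ge _ _ _ h, app_at_lt _ _ _ (by simp)]
      simp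
    · rw [app_at_ge _ _ _ h, app_at_ge _ _ _ (by simp; omega)]
      congr 1
      simp; omega

lemma extend_pref {u : List Bool} {ω : CSeq} (h : IsPref u ω) :
    IsPref (u ++ [ω u.length]) ω := by
  obtain ⟨ω', rfl⟩ := h
  have h0 : app u ω' u.length = ω' 0 := by rw [app_at_ge _ _ _ (le_refl _)]; simp
  rw [h0]
  exact ⟨_, app_cons_tail u ω'⟩

end S8

namespace S8

lemma rep_dom_unique {g : VPerm} {T : Finset (List Bool × List Bool)}
    (hT : Represents g T) {p q : List Bool × List Bool} {ω : CSeq}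
    (hp : p ∈ T) (hq : q ∈ T) (hpp : IsPref p.1 ω) (hqp : IsPref q.1 ω) : p = q := by
  obtain ⟨r, hr, hu⟩ := hT.1 ω
  rw [hu p ⟨hp, hpp⟩, hu q ⟨hq, hqp⟩]

lemma rep_ran_unique {g : VPerm} {T : Finset (List Bool × List Bool)}
    (hT : Represents g T) {p q : List Bool × List Bool} {ω : CSeq}
    (hp : p ∈ T) (hq : q ∈ T) (hpp : IsPref p.2 ω) (hqp : IsPref q.2 ω) : p = q := by
  obtain ⟨r, hr, hu⟩ := hT.2.1 ω
  rw [hu p ⟨hp, hpp⟩, hu q ⟨hq, hqp⟩]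

lemma rep_nonempty {g : VPerm} {T : Finset (List Bool × List Bool)}
    (hT : Represents g T) : T.Nonempty := by
  obtain ⟨p, ⟨hp, _⟩, _⟩ := hT.1 (fun _ => false)
  exact ⟨p, hp⟩

lemma refine_dom {g : VPerm} {T : Finset (List Bool × List Bool)}
    (hT : Represents g T) {a b : List Bool} (hab : ∀ ω, g (app a ω) = app b ω)
    {c d : List Bool} (hcd : (c, d) ∈ T) (hpre : a <+: c) :
    d = b ++ c.drop a.length := by
  obtain ⟨r, rfl⟩ := hpre
  rw [List.drop_left]
  apply word_ext; intro ω
  have h1 := hT.2.2 _ hcd ω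
  simp only at h1
  rw [app_append] at h1
  rw [← h1, hab, ← app_append]

lemma dom_nil {g : VPerm} {T : Finset (List Bool × List Bool)}
    (hT : Represents g T) {z : List Bool} (hm : (([] : List Bool), z) ∈ T) :
    z = [] := by
  have hall : ∀ q ∈ T, q = (([] : List Bool), z) := by
    intro q hq
    exact rep_dom_unique hT hq hm (isPref_self q.1 (fun _ => false)) (isPref_nil _)
  by_contra hz
  have hlen : 0 < z.length := List.length_pos_iff.2 hz
  obtain ⟨p, ⟨hpT, hppref⟩, _⟩ := hT.2.1 (fun _ => !z[0])
  rw [hall p hpT] at hppref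
  have := (isPref_iff.1 hppref) 0 hlen
  simp at this

lemma ran_nil {g : VPerm} {T : Finset (List Bool × List Bool)}
    (hT : Represents g T) {w : List Bool} (hm : (w, ([] : List Bool)) ∈ T) :
    w = [] := by
  have hall : ∀ q ∈ T, q = (w, ([] : List Bool)) := by
    intro q hq
    exact rep_ran_unique hT hq hm (isPref_self q.2 (fun _ => false)) (isPref_nil _)
  by_contra hw
  have hlen : 0 < w.length := List.length_pos_iff.2 hw
  obtain ⟨p, ⟨hpT, hppref⟩, _⟩ := hT.1 (fun _ => !w[0])
  rw [hall p hpT] at hppref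
  have := (isPref_iff.1 hppref) 0 hlen
  simp at this

lemma reduced_no_strict_ext {g : VPerm} {T' : Finset (List Bool × List Bool)}
    (hT' : Represents g T') (hred : Reduced T')
    {a b : List Bool} (hab : ∀ ω, g (app a ω) = app b ω)
    {a' b' : List Bool} (hmem : (a', b') ∈ T') (hpre : a <+: a') : a = a' := by
  by_contra hne
  have halen : a.length < a'.length := by
    rcases lt_or_eq_of_le hpre.length_le with h | h
    · exact h
    · exact absurd (hpre.eq_of_length h) hne
  set ζ : CSeq := fun _ => false with hζ
  set D := T'.filter (fun p => a <+: p.1) with hD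
  have hDne : D.Nonempty := ⟨(a', b'), Finset.mem_filter.2 ⟨hmem, hpre⟩⟩
  obtain ⟨p, hpD, hmax⟩ := Finset.exists_max_image D (fun p => p.1.length) hDne
  obtain ⟨hpT, hpa⟩ := Finset.mem_filter.1 hpD
  have hmax' : a'.length ≤ p.1.length :=
    hmax (a', b') (Finset.mem_filter.2 ⟨hmem, hpre⟩)
  obtain ⟨s, hs⟩ := hpa
  have hsne : s ≠ [] := by
    rintro rfl
    rw [← hs] at hmax'
    simp at hmax'
    omega
  obtain ⟨x, hx⟩ : ∃ x, x = s.getLast hsne := ⟨_, rfl⟩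
  set e := a ++ s.dropLast with he
  have hc : p.1 = e ++ [x] := by
    rw [← hs, he, List.append_assoc, hx, List.dropLast_append_getLast hsne]
  have hclen : p.1.length = e.length + 1 := by rw [hc]; simp
  have haee : a <+: e := ⟨s.dropLast, rfl⟩
  have halen2 : a.length ≤ e.length := haee.length_le
  set ω := app (e ++ [!x]) ζ with hω
  obtain ⟨q, ⟨hqT, hqpref⟩, _⟩ := hT'.1 ω
  have hapref : IsPref a ω :=
    isPref_app_of_prefix (haee.trans ⟨[!x], rfl⟩) ζ
  have hepref : IsPref e ω := isPref_app_of_prefix ⟨[!x], rfl⟩ ζ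
  -- q.1 is not a prefix of e
  have hqnote : ¬ (q.1 <+: e) := by
    intro hqe
    have hq1p : q.1 <+: p.1 := hqe.trans (hc ▸ ⟨[x], rfl⟩)
    have heq : q = p := rep_dom_unique hT' hqT hpT
      (isPref_app_of_prefix hq1p ζ) (isPref_self p.1 ζ)
    rw [heq] at hqe
    have := hqe.length_le
    omega
  -- a <+: q.1
  have haq : a <+: q.1 := by
    rcases isPref_comparable hqpref hapref with h | h
    · exact absurd (h.trans haee) hqnote
    · exact h
  have hqD : q ∈ D := Finset.mem_filter.2 ⟨hqT, haq⟩
  have hqlen_le : q.1.length ≤ e.length + 1 := by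
    have := hmax q hqD
    omega
  have hqlen_ge : e.length + 1 ≤ q.1.length := by
    by_contra hlt
    push_neg at hlt
    exact hqnote (prefix_of_isPref_le hqpref hepref (by omega))
  have hq1 : q.1 = e ++ [!x] := by
    have h1 : q.1 <+: e ++ [!x] :=
      prefix_of_isPref_le hqpref (isPref_self _ ζ) (by simp; omega)
    exact h1.eq_of_length (by simp; omega)
  -- ranges
  have hp2 : p.2 = b ++ s := by
    have := refine_dom hT' hab (show (p.1, p.2) ∈ T' by simpa using hpT)
      (show a <+: p.1 from ⟨s, hs⟩)
    rw [this, ← hs, List.drop_left]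
  have hq2 : q.2 = b ++ (s.dropLast ++ [!x]) := by
    have := refine_dom hT' hab (show (q.1, q.2) ∈ T' by simpa using hqT)
      (show a <+: q.1 from haq)
    rw [this, hq1, he, List.append_assoc, List.drop_left]
  set f := b ++ s.dropLast with hf
  have hp' : p = (e ++ [x], f ++ [x]) := by
    have : p.2 = f ++ [x] := by
      rw [hp2, hf, List.append_assoc]
      congr 1
      rw [hx]
      exact (List.dropLast_append_getLast hsne).symm
    rw [← hc, ← this]
  have hq' : q = (e ++ [!x], f ++ [!x]) := by
    rw [← hq1]
    have : q.2 = f ++ [!x] := by rw [hq2, hf, List.append_assoc]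
    rw [← this]
  apply hred e f
  cases x
  · constructor
    · rw [← hp']; exact hpT
    · rw [show [true] = [!false] from rfl, ← hq']; exact hqT
  · constructor
    · rw [show [false] = [!true] from rfl, ← hq']; exact hqT
    · rw [← hp']; exact hpT

lemma reduced_subset {g : VPerm} {T T' : Finset (List Bool × List Bool)}
    (hT : Represents g T) (hrT : Reduced T)
    (hT' : Represents g T') (hrT' : Reduced T') : T ⊆ T' := by
  intro p hp
  obtain ⟨a, b⟩ := p
  set ζ : CSeq := fun _ => false with hζ
  set ω := app a ζ with hω
  obtain ⟨q, ⟨hqT', hqpref⟩, _⟩ := hT'.1 ω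
  have hXa : IsPref a ω := isPref_self _ _
  have hcyl : ∀ ω, g (app a ω) = app b ω := hT.2.2 (a, b) hp
  rcases isPref_comparable hXa hqpref with hc | hc
  · have heq : a = q.1 :=
      reduced_no_strict_ext hT' hrT' hcyl (show (q.1, q.2) ∈ T' by simpa using hqT') hc
    have hb : q.2 = b ++ q.1.drop a.length :=
      refine_dom hT' hcyl (show (q.1, q.2) ∈ T' by simpa using hqT') (heq ▸ List.prefix_refl _)
    rw [← heq, List.drop_length, List.append_nil] at hb
    have : (a, b) = q := Prod.ext heq hb.symm
    rw [this]; exact hqT'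
  · have hcyl' : ∀ ω, g (app q.1 ω) = app q.2 ω := hT'.2.2 q hqT'
    have heq : q.1 = a := reduced_no_strict_ext hT hrT hcyl' hp hc
    have hb : b = q.2 ++ a.drop q.1.length := refine_dom hT hcyl' hp hc
    rw [heq, List.drop_length, List.append_nil] at hb
    have : (a, b) = q := Prod.ext heq.symm hb
    rw [this]; exact hqT'

lemma reduced_unique {g : VPerm} {T T' : Finset (List Bool × List Bool)}
    (hT : Represents g T) (hrT : Reduced T)
    (hT' : Represents g T') (hrT' : Reduced T') : T = T' :=
  Finset.Subset.antisymm (reduced_subset hT hrT hT' hrT') (reduced_subset hT' hrT' hT hrT)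

lemma Nbr_eq {g : VPerm} {T : Finset (List Bool × List Bool)}
    (hT : Represents g T) (hrT : Reduced T) : Nbr g = T.card := by
  have hset : {n | ∃ T', Represents g T' ∧ Reduced T' ∧ T'.card = n} = {T.card} := by
    ext n
    constructor
    · rintro ⟨T', hT', hrT', rfl⟩
      simp [reduced_unique hT' hrT' hT hrT]
    · rintro rfl
      exact ⟨T, hT, hrT, rfl⟩
  rw [Nbr, hset, csInf_singleton]

lemma isBranch_iff {g : VPerm} {T : Finset (List Bool × List Bool)}
    (hT : Represents g T) (hrT : Reduced T) {a b : List Bool} :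
    IsBranch g a b ↔ (a, b) ∈ T := by
  constructor
  · rintro ⟨T', hT', hrT', hm⟩
    rwa [reduced_unique hT' hrT' hT hrT] at hm
  · intro hm
    exact ⟨T, hT, hrT, hm⟩

end S8

namespace S8

lemma merge_represents {g : VPerm} {T : Finset (List Bool × List Bool)}
    (hT : Represents g T) {a b : List Bool}
    (h0 : (a ++ [false], b ++ [false]) ∈ T) (h1 : (a ++ [true], b ++ [true]) ∈ T) :
    Represents g
      (insert (a, b) ((T.erase (a ++ [false], b ++ [false])).erase
        (a ++ [true], b ++ [true]))) := by
  set s0 := (a ++ [false], b ++ [false]) with hs0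
  set s1 := (a ++ [true], b ++ [true]) with hs1
  set T2 := insert (a, b) ((T.erase s0).erase s1) with hT2d
  have hsib : ∀ x : Bool, (a ++ [x], b ++ [x]) ∈ T := by
    intro x; cases x; exacts [h0, h1]
  have hmemT2 : ∀ q, q ∈ T2 ↔ q = (a, b) ∨ (q ∈ T ∧ q ≠ s0 ∧ q ≠ s1) := by
    intro q
    simp only [hT2d, Finset.mem_insert, Finset.mem_erase]
    tauto
  refine ⟨?_, ?_, ?_⟩
  · intro ω
    by_cases hu : IsPref a ω
    · refine ⟨(a, b), ⟨Finset.mem_insert_self _ _, hu⟩, ?_⟩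
      rintro q ⟨hqT2, hqpref⟩
      rcases (hmemT2 q).1 hqT2 with rfl | ⟨hqT, hq0, hq1⟩
      · rfl
      · exfalso
        have hx := extend_pref hu
        revert hx
        cases hxval : ω a.length with
        | false => intro hx; exact hq0 (rep_dom_unique hT hqT h0 hqpref hx)
        | true => intro hx; exact hq1 (rep_dom_unique hT hqT h1 hqpref hx)
    · obtain ⟨p, ⟨hpT, hppref⟩, hpu⟩ := hT.1 ω
      have hp0 : p ≠ s0 := by
        rintro rfl; exact hu (isPref_of_prefix ⟨[false], rfl⟩ hppref)
      have hp1 : p ≠ s1 := by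
        rintro rfl; exact hu (isPref_of_prefix ⟨[true], rfl⟩ hppref)
      refine ⟨p, ⟨(hmemT2 p).2 (Or.inr ⟨hpT, hp0, hp1⟩), hppref⟩, ?_⟩
      rintro q ⟨hqT2, hqpref⟩
      rcases (hmemT2 q).1 hqT2 with rfl | ⟨hqT, _, _⟩
      · exact absurd hqpref hu
      · exact hpu q ⟨hqT, hqpref⟩
  · intro ω
    by_cases hu : IsPref b ω
    · refine ⟨(a, b), ⟨Finset.mem_insert_self _ _, hu⟩, ?_⟩
      rintro q ⟨hqT2, hqpref⟩
      rcases (hmemT2 q).1 hqT2 with rfl | ⟨hqT, hq0, hq1⟩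
      · rfl
      · exfalso
        have hx := extend_pref hu
        revert hx
        cases hxval : ω b.length with
        | false => intro hx; exact hq0 (rep_ran_unique hT hqT h0 hqpref hx)
        | true => intro hx; exact hq1 (rep_ran_unique hT hqT h1 hqpref hx)
    · obtain ⟨p, ⟨hpT, hppref⟩, hpu⟩ := hT.2.1 ω
      have hp0 : p ≠ s0 := by
        rintro rfl; exact hu (isPref_of_prefix ⟨[false], rfl⟩ hppref)
      have hp1 : p ≠ s1 := by
        rintro rfl; exact hu (isPref_of_prefix ⟨[true], rfl⟩ hppref)
      refine ⟨p, ⟨(hmemT2 p).2 (Or.inr ⟨hpT, hp0, hp1⟩), hppref⟩, ?_⟩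
      rintro q ⟨hqT2, hqpref⟩
      rcases (hmemT2 q).1 hqT2 with rfl | ⟨hqT, _, _⟩
      · exact absurd hqpref hu
      · exact hpu q ⟨hqT, hqpref⟩
  · intro p hpT2 ω
    rcases (hmemT2 p).1 hpT2 with rfl | ⟨hpT, _, _⟩
    · have h1' := hT.2.2 _ (hsib (ω 0)) (fun n => ω (n + 1))
      simp only at h1'
      rw [← app_cons_tail a ω, ← app_cons_tail b ω] at h1'
      exact h1'
    · exact hT.2.2 _ hpT ω

lemma exists_reduced_aux (g : VPerm) :
    ∀ n (T : Finset (List Bool × List Bool)), T.card ≤ n → Represents g T →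
      ∃ T₀, Represents g T₀ ∧ Reduced T₀ := by
  intro n
  induction n with
  | zero =>
    intro T hc hT
    have := Finset.card_pos.2 (rep_nonempty hT)
    omega
  | succ n ih =>
    intro T hc hT
    by_cases hr : Reduced T
    · exact ⟨T, hT, hr⟩
    · rw [Reduced] at hr
      push_neg at hr
      obtain ⟨a, b, h0, h1⟩ := hr
      have hrep2 := merge_represents hT h0 h1
      have hne01 : (a ++ [false], b ++ [false]) ≠ (a ++ [true], b ++ [true]) := by
        simp
      have hmem1 : (a ++ [true], b ++ [true]) ∈
          T.erase (a ++ [false], b ++ [false]) :=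
        Finset.mem_erase.2 ⟨Ne.symm hne01, h1⟩
      have hc1 : (T.erase (a ++ [false], b ++ [false])).card = T.card - 1 :=
        Finset.card_erase_of_mem h0
      have hc2 : ((T.erase (a ++ [false], b ++ [false])).erase
          (a ++ [true], b ++ [true])).card =
          (T.erase (a ++ [false], b ++ [false])).card - 1 :=
        Finset.card_erase_of_mem hmem1
      have hc3 := Finset.card_insert_le (a, b)
        ((T.erase (a ++ [false], b ++ [false])).erase (a ++ [true], b ++ [true]))
      have hpos : 0 < (T.erase (a ++ [false], b ++ [false])).card :=
        Finset.card_pos.2 ⟨_, hmem1⟩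
      exact ih _ (by omega) hrep2

lemma exists_reduced {g : VPerm} (hg : InV g) :
    ∃ T, Represents g T ∧ Reduced T := by
  obtain ⟨T, hT⟩ := hg
  exact exists_reduced_aux g T.card T le_rfl hT

end S8

namespace S8

lemma cancel_left {u : List Bool} {s t : List Bool} (h : u ++ s = u ++ t) : s = t :=
  List.append_cancel_left h

end S8


/-- Let `g ∈ V`, let `u → v` be a branch of `g`, let
`h ∈ F` and let `h' = h_{[v]}` be the copy of `h` in `F_{[v]}`.  Then
`N(g·h') = N(g) + N(h) − 1`, and the branches of `g·h'` are exactly the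
`u·w → v·z` for branches `w → z` of `h`, together with the branches of `g`
other than `u → v`. -/
theorem stmt8 (g h h' : VPerm) (u v : List Bool)
    (hg : InV g) (hh : InF h) (hbr : IsBranch g u v) (hcopy : IsCopy h v h') :
    Nbr (g.trans h') = Nbr g + Nbr h - 1 ∧
    (∀ a b : List Bool,
      IsBranch (g.trans h') a b ↔
        ((∃ w z : List Bool, IsBranch h w z ∧ a = u ++ w ∧ b = v ++ z) ∨
         (IsBranch g a b ∧ (a, b) ≠ (u, v)))) := by
    classical
  obtain ⟨T₀, hT₀, hr₀, hmuv⟩ := hbr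
  obtain ⟨S₀, hS₀, hrS⟩ := S8.exists_reduced hh.1
  set ζ : CSeq := fun _ => false with hζ
  set I := S₀.image (fun p => (u ++ p.1, v ++ p.2)) with hI
  set T' := (T₀.erase (u, v)) ∪ I with hT'd
  have hmem : ∀ q, q ∈ T' ↔
      ((q ∈ T₀ ∧ q ≠ (u, v)) ∨ ∃ w z, (w, z) ∈ S₀ ∧ q = (u ++ w, v ++ z)) := by
    intro q
    simp only [hT'd, Finset.mem_union, Finset.mem_erase, hI, Finset.mem_image,
      Prod.exists]
    constructor
    · rintro (⟨h1, h2⟩ | ⟨w, z, hwz, rfl⟩)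
      · exact Or.inl ⟨h2, h1⟩
      · exact Or.inr ⟨w, z, hwz, rfl⟩
    · rintro (⟨h1, h2⟩ | ⟨w, z, hwz, rfl⟩)
      · exact Or.inl ⟨h2, h1⟩
      · exact Or.inr ⟨w, z, hwz, rfl⟩
  have hguv : ∀ ω, g (app u ω) = app v ω := hT₀.2.2 _ hmuv
  have hrep : Represents (g.trans h') T' := by
    refine ⟨?_, ?_, ?_⟩
    · -- domain completeness
      intro ω
      by_cases hu : IsPref u ω
      · obtain ⟨ω', rfl⟩ := hu
        obtain ⟨⟨w0, z0⟩, ⟨hpS, hppref⟩, hpu⟩ := hS₀.1 ω'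
        have hppref' : IsPref w0 ω' := hppref
        refine ⟨(u ++ w0, v ++ z0),
          ⟨(hmem _).2 (Or.inr ⟨w0, z0, hpS, rfl⟩),
            S8.isPref_append_iff.2 hppref'⟩, ?_⟩
        rintro q ⟨hqT', hqpref⟩
        rcases (hmem q).1 hqT' with ⟨hqT₀, hqne⟩ | ⟨w, z, hwzS, rfl⟩
        · exact absurd
            (S8.rep_dom_unique hT₀ hqT₀ hmuv hqpref (S8.isPref_self u ω')) hqne
        · have hw : IsPref w ω' := S8.isPref_append_iff.1 hqpref
          have heq : (w, z) = (w0, z0) := hpu (w, z) ⟨hwzS, hw⟩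
          cases heq
          rfl
      · obtain ⟨p, ⟨hpT₀, hppref⟩, hpu⟩ := hT₀.1 ω
        have hpne : p ≠ (u, v) := by rintro rfl; exact hu hppref
        refine ⟨p, ⟨(hmem p).2 (Or.inl ⟨hpT₀, hpne⟩), hppref⟩, ?_⟩
        rintro q ⟨hqT', hqpref⟩
        rcases (hmem q).1 hqT' with ⟨hqT₀, _⟩ | ⟨w, z, hwzS, rfl⟩
        · exact hpu q ⟨hqT₀, hqpref⟩
        · exact absurd (S8.isPref_of_prefix ⟨w, rfl⟩ hqpref) hu
    · -- range completeness
      intro ω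
      by_cases hv : IsPref v ω
      · obtain ⟨ω', rfl⟩ := hv
        obtain ⟨⟨w0, z0⟩, ⟨hpS, hppref⟩, hpu⟩ := hS₀.2.1 ω'
        have hppref' : IsPref z0 ω' := hppref
        refine ⟨(u ++ w0, v ++ z0),
          ⟨(hmem _).2 (Or.inr ⟨w0, z0, hpS, rfl⟩),
            S8.isPref_append_iff.2 hppref'⟩, ?_⟩
        rintro q ⟨hqT', hqpref⟩
        rcases (hmem q).1 hqT' with ⟨hqT₀, hqne⟩ | ⟨w, z, hwzS, rfl⟩
        · exact absurd
            (S8.rep_ran_unique hT₀ hqT₀ hmuv hqpref (S8.isPref_self v ω')) hqne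
        · have hz : IsPref z ω' := S8.isPref_append_iff.1 hqpref
          have heq : (w, z) = (w0, z0) := hpu (w, z) ⟨hwzS, hz⟩
          cases heq
          rfl
      · obtain ⟨p, ⟨hpT₀, hppref⟩, hpu⟩ := hT₀.2.1 ω
        have hpne : p ≠ (u, v) := by rintro rfl; exact hv hppref
        refine ⟨p, ⟨(hmem p).2 (Or.inl ⟨hpT₀, hpne⟩), hppref⟩, ?_⟩
        rintro q ⟨hqT', hqpref⟩
        rcases (hmem q).1 hqT' with ⟨hqT₀, _⟩ | ⟨w, z, hwzS, rfl⟩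
        · exact hpu q ⟨hqT₀, hqpref⟩
        · exact absurd (S8.isPref_of_prefix ⟨z, rfl⟩ hqpref) hv
    · -- cylinder maps
      intro p hpT' ω
      rcases (hmem p).1 hpT' with ⟨hpT₀, hpne⟩ | ⟨w, z, hwzS, rfl⟩
      · have h1 := hT₀.2.2 p hpT₀ ω
        have h2 : ¬ IsPref v (app p.2 ω) := by
          intro hvp
          exact hpne (S8.rep_ran_unique hT₀ hpT₀ hmuv (S8.isPref_self _ _) hvp)
        simp only [Equiv.trans_apply, h1, hcopy.2 _ h2]
      · have hz : ∀ ω, h (app w ω) = app z ω := hS₀.2.2 (w, z) hwzS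
        simp only [Equiv.trans_apply]
        rw [S8.app_append, hguv, hcopy.1, hz, ← S8.app_append]
  have hred : Reduced T' := by
    intro c d hcd
    obtain ⟨hc0, hc1⟩ := hcd
    rcases (hmem _).1 hc0 with ⟨h0T, h0ne⟩ | ⟨w1, z1, hw1, he1⟩
    · rcases (hmem _).1 hc1 with ⟨h1T, h1ne⟩ | ⟨w2, z2, hw2, he2⟩
      · exact hr₀ c d ⟨h0T, h1T⟩
      · have he2a : c ++ [true] = u ++ w2 := congrArg Prod.fst he2
        have he2b : d ++ [true] = v ++ z2 := congrArg Prod.snd he2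
        by_cases hw2e : w2 = []
        · subst hw2e
          have hz2 : z2 = [] := S8.dom_nil hS₀ hw2
          subst hz2
          simp only [List.append_nil] at he2a he2b
          rw [← he2a, ← he2b] at hmuv
          exact hr₀ c d ⟨h0T, hmuv⟩
        · have hlen : u.length + w2.length = c.length + 1 := by
            have := congrArg List.length he2a; simp at this; omega
          have hwlen : 0 < w2.length := List.length_pos_iff.2 hw2e
          have hul : u.length ≤ c.length := by omega
          have hupre : u <+: c :=
            List.prefix_of_prefix_length_le ⟨w2, he2a.symm⟩ ⟨[true], rfl⟩ hul
          have heqc : (c ++ [false], d ++ [false]) = (u, v) :=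
            S8.rep_dom_unique hT₀ h0T hmuv (S8.isPref_self _ ζ)
              (S8.isPref_app_of_prefix (hupre.trans ⟨[false], rfl⟩) ζ)
          have := congrArg (fun q => q.1.length) heqc
          simp at this
          omega
    · rcases (hmem _).1 hc1 with ⟨h1T, h1ne⟩ | ⟨w2, z2, hw2, he2⟩
      · have he1a : c ++ [false] = u ++ w1 := congrArg Prod.fst he1
        have he1b : d ++ [false] = v ++ z1 := congrArg Prod.snd he1
        by_cases hw1e : w1 = []
        · subst hw1e
          have hz1 : z1 = [] := S8.dom_nil hS₀ hw1
          subst hz1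
          simp only [List.append_nil] at he1a he1b
          rw [← he1a, ← he1b] at hmuv
          exact hr₀ c d ⟨hmuv, h1T⟩
        · have hlen : u.length + w1.length = c.length + 1 := by
            have := congrArg List.length he1a; simp at this; omega
          have hwlen : 0 < w1.length := List.length_pos_iff.2 hw1e
          have hul : u.length ≤ c.length := by omega
          have hupre : u <+: c :=
            List.prefix_of_prefix_length_le ⟨w1, he1a.symm⟩ ⟨[false], rfl⟩ hul
          have heqc : (c ++ [true], d ++ [true]) = (u, v) :=
            S8.rep_dom_unique hT₀ h1T hmuv (S8.isPref_self _ ζ)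
              (S8.isPref_app_of_prefix (hupre.trans ⟨[true], rfl⟩) ζ)
          have := congrArg (fun q => q.1.length) heqc
          simp at this
          omega
      · -- both in the translated part
        have he1a : c ++ [false] = u ++ w1 := congrArg Prod.fst he1
        have he1b : d ++ [false] = v ++ z1 := congrArg Prod.snd he1
        have he2a : c ++ [true] = u ++ w2 := congrArg Prod.fst he2
        have he2b : d ++ [true] = v ++ z2 := congrArg Prod.snd he2
        have hlen1 : u.length + w1.length = c.length + 1 := by
          have := congrArg List.length he1a; simp at this; omega
        have hlen2 : u.length + w2.length = c.length + 1 := by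
          have := congrArg List.length he2a; simp at this; omega
        have hlenz1 : v.length + z1.length = d.length + 1 := by
          have := congrArg List.length he1b; simp at this; omega
        have hlenz2 : v.length + z2.length = d.length + 1 := by
          have := congrArg List.length he2b; simp at this; omega
        have hw1ne : w1 ≠ [] := by
          rintro rfl
          have hw2e : w2 = [] := by
            have : w2.length = 0 := by simp at hlen1; omega
            exact List.length_eq_zero_iff.1 this
          subst hw2e
          simp only [List.append_nil] at he1a he2a
          have : ([false] : List Bool) = [true] :=
            S8.cancel_left (he1a.trans he2a.symm)
          simp at this
        have hz1ne : z1 ≠ [] := by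
          rintro rfl
          have hz2e : z2 = [] := by
            have : z2.length = 0 := by simp at hlenz1; omega
            exact List.length_eq_zero_iff.1 this
          subst hz2e
          simp only [List.append_nil] at he1b he2b
          have : ([false] : List Bool) = [true] :=
            S8.cancel_left (he1b.trans he2b.symm)
          simp at this
        have hul : u.length ≤ c.length := by
          have := List.length_pos_iff.2 hw1ne; omega
        have hvl : v.length ≤ d.length := by
          have := List.length_pos_iff.2 hz1ne; omega
        obtain ⟨c', rfl⟩ :=
          List.prefix_of_prefix_length_le ⟨w1, he1a.symm⟩ ⟨[false], rfl⟩ hul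
        obtain ⟨d', rfl⟩ :=
          List.prefix_of_prefix_length_le ⟨z1, he1b.symm⟩ ⟨[false], rfl⟩ hvl
        rw [List.append_assoc] at he1a he2a
        rw [List.append_assoc] at he1b he2b
        have hw1' : w1 = c' ++ [false] := (S8.cancel_left he1a).symm
        have hw2' : w2 = c' ++ [true] := (S8.cancel_left he2a).symm
        have hz1' : z1 = d' ++ [false] := (S8.cancel_left he1b).symm
        have hz2' : z2 = d' ++ [true] := (S8.cancel_left he2b).symm
        rw [hw1', hz1'] at hw1
        rw [hw2', hz2'] at hw2
        exact hrS c' d' ⟨hw1, hw2⟩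
  have hinj : Function.Injective
      (fun p : List Bool × List Bool => (u ++ p.1, v ++ p.2)) := by
    rintro ⟨a1, b1⟩ ⟨a2, b2⟩ hpq
    simp only [Prod.mk.injEq] at hpq ⊢
    exact ⟨S8.cancel_left hpq.1, S8.cancel_left hpq.2⟩
  have hdisj : Disjoint (T₀.erase (u, v)) I := by
    rw [Finset.disjoint_left]
    intro q hqE hqI
    obtain ⟨hne, hqT₀⟩ := Finset.mem_erase.1 hqE
    rw [hI] at hqI
    obtain ⟨⟨w, z⟩, hwz, rfl⟩ := Finset.mem_image.1 hqI
    exact hne (S8.rep_dom_unique hT₀ hqT₀ hmuv (S8.isPref_self _ ζ)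
      (S8.isPref_app_of_prefix ⟨w, rfl⟩ ζ))
  have hcard : T'.card = T₀.card - 1 + S₀.card := by
    rw [hT'd, Finset.card_union_of_disjoint hdisj, Finset.card_erase_of_mem hmuv,
      hI, Finset.card_image_of_injective _ hinj]
  have hNg : Nbr g = T₀.card := S8.Nbr_eq hT₀ hr₀
  have hNh : Nbr h = S₀.card := S8.Nbr_eq hS₀ hrS
  have hNgh : Nbr (g.trans h') = T'.card := S8.Nbr_eq hrep hred
  have hT₀pos : 1 ≤ T₀.card := Finset.card_pos.2 ⟨_, hmuv⟩
  have hS₀pos : 1 ≤ S₀.card := Finset.card_pos.2 (S8.rep_nonempty hS₀)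
  constructor
  · rw [hNg, hNh, hNgh, hcard]; omega
  · intro a b
    rw [S8.isBranch_iff hrep hred, hmem (a, b)]
    constructor
    · rintro (⟨hT, hne⟩ | ⟨w, z, hwz, heq⟩)
      · exact Or.inr ⟨(S8.isBranch_iff hT₀ hr₀).2 hT, hne⟩
      · exact Or.inl ⟨w, z, (S8.isBranch_iff hS₀ hrS).2 hwz,
          congrArg Prod.fst heq, congrArg Prod.snd heq⟩
    · rintro (⟨w, z, hbr', rfl, rfl⟩ | ⟨hbrg, hne⟩)
      · exact Or.inr ⟨w, z, (S8.isBranch_iff hS₀ hrS).1 hbr', rfl⟩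
      · exact Or.inl ⟨(S8.isBranch_iff hT₀ hr₀).1 hbrg, hne⟩
end
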